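/- arXiv:2202.04165 — 5 statements merged into one kernel-verified Lean document; each statement's English description precedes it below -/
import Mathlib

section
/- The functional times are almost surely monotone in the number of nodes: for every integer m ≥ 1, T_m ≤ T_{m+1} almost surely (where T_m and T_{m+1} are constructed from the same hacking times X_{k,i} and detecting times Y_k). -/
open MeasureTheory ProbabilityTheory Filter
open scoped ENNReal Topology

/-- Sum of the first `m` hacking times in cycle `k`: `S^{(k)}_m = Σ_{i=1}^m X_{k,i}`. -/
noncomputable def cycleSum {Ω : Type*} (X : ℕ → ℕ → Ω → ℝ) (m k : ℕ) (ω : Ω) : ℝ :=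
  ∑ i ∈ Finset.range m, X k i ω

/-- The first cycle `k ≥ 1` in which the hacker hacks all `m` nodes before detection,
i.e. `N_m = inf {k ≥ 1 : Y_k > S^{(k)}_m}` (`0` encodes `N_m = ∞`). -/
noncomputable def hackCycle {Ω : Type*} (X : ℕ → ℕ → Ω → ℝ) (Y : ℕ → Ω → ℝ) (m : ℕ)
    (ω : Ω) : ℕ :=
  sInf {k | 1 ≤ k ∧ cycleSum X m k ω < Y k ω}

/-- The functional time `T_m = Σ_{k=1}^{N_m − 1} Y_k + S^{(N_m)}_m`, with `T_m = ∞`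
if `N_m = ∞`. -/
noncomputable def funcTime {Ω : Type*} (X : ℕ → ℕ → Ω → ℝ) (Y : ℕ → Ω → ℝ) (m : ℕ)
    (ω : Ω) : ℝ≥0∞ :=
  if hackCycle X Y m ω = 0 then ⊤
  else ENNReal.ofReal ((∑ k ∈ Finset.Ico 1 (hackCycle X Y m ω), Y k ω)
    + cycleSum X m (hackCycle X Y m ω) ω)

/-- The functional times are a.s. monotone in the number of nodes:
for every `m ≥ 1`, `T_m ≤ T_{m+1}` almost surely. -/
theorem stmt_10
{Ω : Type*} [MeasurableSpace Ω] (μ : Measure Ω) [IsProbabilityMeasure μ]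
    (X : ℕ → ℕ → Ω → ℝ) (Y : ℕ → Ω → ℝ)
    (hXm : ∀ k i, Measurable (X k i)) (hYm : ∀ k, Measurable (Y k))
    (hindep : iIndepFun
      (Sum.elim (fun p : ℕ × ℕ => X p.1 p.2) Y) μ)
    (hXid : ∀ k i, IdentDistrib (X k i) (X 1 0) μ μ)
    (hYid : ∀ k, IdentDistrib (Y k) (Y 1) μ μ)
    (hXpos : ∀ k i, ∀ᵐ ω ∂μ, 0 < X k i ω)
    (hYpos : ∀ k, ∀ᵐ ω ∂μ, 0 < Y k ω)
    (m : ℕ) (hm : 1 ≤ m) :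
    ∀ᵐ ω ∂μ, funcTime X Y m ω ≤ funcTime X Y (m + 1) ω := by
  have hX : ∀ᵐ ω ∂μ, ∀ k i, 0 < X k i ω := by
    rw [ae_all_iff]; intro k; rw [ae_all_iff]; exact hXpos k
  have hY : ∀ᵐ ω ∂μ, ∀ k, 0 < Y k ω := ae_all_iff.mpr hYpos
  filter_upwards [hX, hY] with ω h1 h2
  have hAB : {k | 1 ≤ k ∧ cycleSum X (m + 1) k ω < Y k ω} ⊆
      {k | 1 ≤ k ∧ cycleSum X m k ω < Y k ω} := by
    intro k hk
    refine ⟨hk.1, lt_of_le_of_lt ?_ hk.2⟩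
    rw [cycleSum, cycleSum, Finset.sum_range_succ]
    exact le_add_of_nonneg_right (h1 k m).le
  unfold funcTime
  by_cases hn' : hackCycle X Y (m + 1) ω = 0
  · simp [hn']
  · have hmem' : hackCycle X Y (m + 1) ω ∈ {k | 1 ≤ k ∧ cycleSum X (m + 1) k ω < Y k ω} :=
      Nat.sInf_mem (Nat.nonempty_of_pos_sInf (Nat.pos_of_ne_zero hn'))
    have hmem : hackCycle X Y m ω ∈ {k | 1 ≤ k ∧ cycleSum X m k ω < Y k ω} :=
      Nat.sInf_mem ⟨_, hAB hmem'⟩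
    have hle : hackCycle X Y m ω ≤ hackCycle X Y (m + 1) ω :=
      Nat.sInf_le (hAB hmem')
    have hn : hackCycle X Y m ω ≠ 0 := by
      have := hmem.1; omega
    rw [if_neg hn, if_neg hn']
    apply ENNReal.ofReal_le_ofReal
    rcases eq_or_lt_of_le hle with heq | hlt
    · rw [heq]
      apply add_le_add le_rfl
      rw [cycleSum, cycleSum, Finset.sum_range_succ]
      exact le_add_of_nonneg_right (h1 _ m).le
    · calc (∑ k ∈ Finset.Ico 1 (hackCycle X Y m ω), Y k ω) + cycleSum X m (hackCycle X Y m ω) ω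
          ≤ (∑ k ∈ Finset.Ico 1 (hackCycle X Y m ω), Y k ω) + Y (hackCycle X Y m ω) ω :=
            add_le_add le_rfl hmem.2.le
        _ = ∑ k ∈ Finset.Ico 1 (hackCycle X Y m ω + 1), Y k ω :=
            (Finset.sum_Ico_succ_top hmem.1 _).symm
        _ ≤ ∑ k ∈ Finset.Ico 1 (hackCycle X Y (m + 1) ω), Y k ω :=
            Finset.sum_le_sum_of_subset_of_nonneg
              (Finset.Ico_subset_Ico_right hlt) (fun k _ _ => (h2 k).le)
        _ ≤ _ :=
            le_add_of_nonneg_right (Finset.sum_nonneg fun i _ => (h1 _ i).le)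
end

section
/- The instantaneous functional probability is non-decreasing in the number of nodes: for every integer m ≥ 1 and every t > 0, P(T_{m+1} > t) ≥ P(T_m > t), i.e. P_{m+1}(t) ≥ P_m(t). -/
open MeasureTheory ProbabilityTheory Filter
open scoped ENNReal Topology

lemma funcTime_mono {Ω : Type*} (X : ℕ → ℕ → Ω → ℝ) (Y : ℕ → Ω → ℝ) (m : ℕ) (ω : Ω)
    (hX : ∀ k i, 0 < X k i ω) (hY : ∀ k, 0 < Y k ω) :
    funcTime X Y m ω ≤ funcTime X Y (m + 1) ω := by
  have hcs : ∀ k, cycleSum X m k ω < cycleSum X (m + 1) k ω := by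
    intro k
    simp only [cycleSum, Finset.sum_range_succ]
    linarith [hX k m]
  have hcsnn : ∀ m' k, 0 ≤ cycleSum X m' k ω := fun m' k =>
    Finset.sum_nonneg fun i _ => (hX k i).le
  have hsub : {k | 1 ≤ k ∧ cycleSum X (m + 1) k ω < Y k ω}
      ⊆ {k | 1 ≤ k ∧ cycleSum X m k ω < Y k ω} := by
    intro k hk
    exact ⟨hk.1, (hcs k).trans hk.2⟩
  by_cases hN : hackCycle X Y (m + 1) ω = 0
  · simp [funcTime, hN]
  · have hne1 : {k | 1 ≤ k ∧ cycleSum X (m + 1) k ω < Y k ω}.Nonempty := by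
      by_contra h
      rw [Set.not_nonempty_iff_eq_empty] at h
      exact hN (by simp [hackCycle, h])
    have hNmem : hackCycle X Y (m + 1) ω ∈
        {k | 1 ≤ k ∧ cycleSum X (m + 1) k ω < Y k ω} := Nat.sInf_mem hne1
    have hne0 : {k | 1 ≤ k ∧ cycleSum X m k ω < Y k ω}.Nonempty :=
      ⟨_, hsub hNmem⟩
    have hN'mem : hackCycle X Y m ω ∈
        {k | 1 ≤ k ∧ cycleSum X m k ω < Y k ω} := Nat.sInf_mem hne0
    have hN' : hackCycle X Y m ω ≠ 0 := by
      intro h; exact absurd (h ▸ hN'mem.1) (by norm_num)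
    have hle : hackCycle X Y m ω ≤ hackCycle X Y (m + 1) ω :=
      Nat.sInf_le (hsub hNmem)
    set N' := hackCycle X Y m ω with hN'def
    set N := hackCycle X Y (m + 1) ω with hNdef
    rw [funcTime, funcTime, if_neg hN, if_neg hN']
    rw [← hN'def, ← hNdef]
    apply ENNReal.ofReal_le_ofReal
    have hsplit : ∑ k ∈ Finset.Ico 1 N, Y k ω
        = (∑ k ∈ Finset.Ico 1 N', Y k ω) + ∑ k ∈ Finset.Ico N' N, Y k ω :=
      (Finset.sum_Ico_consecutive _ hN'mem.1 hle).symm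
    rw [hsplit]
    rcases eq_or_lt_of_le hle with heq | hlt
    · rw [← heq]
      simp only [Finset.Ico_self, Finset.sum_empty, add_zero]
      linarith [hcs N']
    · have hYle : Y N' ω ≤ ∑ k ∈ Finset.Ico N' N, Y k ω := by
        apply Finset.single_le_sum (f := fun k => Y k ω)
          (fun k _ => (hY k).le)
        simp [Finset.mem_Ico, hlt]
      have := hN'mem.2
      have := hcsnn (m + 1) N
      linarith

/-- The instantaneous functional probability is non-decreasing in the number
of nodes: for `m ≥ 1` and `t > 0`, `P(T_{m+1} > t) ≥ P(T_m > t)`. -/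
theorem stmt_11
{Ω : Type*} [MeasurableSpace Ω] (μ : Measure Ω) [IsProbabilityMeasure μ]
    (X : ℕ → ℕ → Ω → ℝ) (Y : ℕ → Ω → ℝ)
    (hXm : ∀ k i, Measurable (X k i)) (hYm : ∀ k, Measurable (Y k))
    (hindep : iIndepFun
      (Sum.elim (fun p : ℕ × ℕ => X p.1 p.2) Y) μ)
    (hXid : ∀ k i, IdentDistrib (X k i) (X 1 0) μ μ)
    (hYid : ∀ k, IdentDistrib (Y k) (Y 1) μ μ)
    (hXpos : ∀ k i, ∀ᵐ ω ∂μ, 0 < X k i ω)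
    (hYpos : ∀ k, ∀ᵐ ω ∂μ, 0 < Y k ω)
    (m : ℕ) (hm : 1 ≤ m) (t : ℝ) (ht : 0 < t) :
    μ {ω | ENNReal.ofReal t < funcTime X Y m ω}
      ≤ μ {ω | ENNReal.ofReal t < funcTime X Y (m + 1) ω} := by
  apply measure_mono_ae
  have hXae : ∀ᵐ ω ∂μ, ∀ k i, 0 < X k i ω := by
    rw [ae_all_iff]; intro k; rw [ae_all_iff]; exact hXpos k
  have hYae : ∀ᵐ ω ∂μ, ∀ k, 0 < Y k ω := by
    rw [ae_all_iff]; exact hYpos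
  filter_upwards [hXae, hYae] with ω hX hY hmem
  exact lt_of_lt_of_le hmem (funcTime_mono X Y m ω hX hY)
end

section
/- (Theorem 3.1, mean functional time part.) If X and Y are integrable and p_{m+1} = P(Y_1 > S^{(1)}_{m+1}) > 0, then the mean functional time is strictly increasing in the number of nodes: E[T_{m+1}] > E[T_m]. -/
open MeasureTheory ProbabilityTheory Filter
open scoped ENNReal Topology

/-! ### Auxiliary material -/

section Aux

set_option linter.unusedSectionVars false

variable {Ω : Type*} [MeasurableSpace Ω] {μ : Measure Ω}
variable {X : ℕ → ℕ → Ω → ℝ} {Y : ℕ → Ω → ℝ}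

lemma measurable_cycleSum (hXm : ∀ k i, Measurable (X k i)) (mm k : ℕ) :
    Measurable (cycleSum X mm k) :=
  Finset.measurable_sum _ fun i _ => hXm k i

lemma measurableSet_hackSet (hXm : ∀ k i, Measurable (X k i)) (hYm : ∀ k, Measurable (Y k))
    (mm k : ℕ) : MeasurableSet {ω | cycleSum X mm k ω < Y k ω} :=
  measurableSet_lt (measurable_cycleSum hXm mm k) (hYm k)

lemma hackCycle_eq_zero_iff {mm : ℕ} {ω : Ω} :
    hackCycle X Y mm ω = 0 ↔ ∀ k, ¬ (1 ≤ k ∧ cycleSum X mm k ω < Y k ω) := by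
  unfold hackCycle
  rw [Nat.sInf_eq_zero]
  constructor
  · rintro (h | h)
    · exact absurd h.1 (by norm_num)
    · intro k hk; rw [Set.eq_empty_iff_forall_notMem] at h; exact h k hk
  · intro h; right; ext k; simp only [Set.mem_setOf_eq, Set.mem_empty_iff_false, iff_false]
    exact h k

lemma hackCycle_mem {mm : ℕ} {ω : Ω} (h : hackCycle X Y mm ω ≠ 0) :
    1 ≤ hackCycle X Y mm ω ∧ cycleSum X mm (hackCycle X Y mm ω) ω < Y (hackCycle X Y mm ω) ω := by
  have hne : {k | 1 ≤ k ∧ cycleSum X mm k ω < Y k ω}.Nonempty := by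
    by_contra hempty
    rw [Set.not_nonempty_iff_eq_empty] at hempty
    exact h (by unfold hackCycle; rw [hempty]; exact Nat.sInf_empty)
  exact Nat.sInf_mem hne

lemma hackCycle_min {mm : ℕ} {ω : Ω} {j : ℕ} (hj1 : 1 ≤ j) (hj : j < hackCycle X Y mm ω) :
    ¬ (cycleSum X mm j ω < Y j ω) := by
  intro hcon
  have : hackCycle X Y mm ω ≤ j :=
    Nat.sInf_le (show j ∈ {k | 1 ≤ k ∧ cycleSum X mm k ω < Y k ω} from ⟨hj1, hcon⟩)
  omega

lemma hackCycle_eq_iff {mm n : ℕ} (hn : n ≠ 0) {ω : Ω} :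
    hackCycle X Y mm ω = n ↔ (cycleSum X mm n ω < Y n ω ∧
      ∀ j < n, ¬ (1 ≤ j ∧ cycleSum X mm j ω < Y j ω)) := by
  constructor
  · intro h
    have hm := hackCycle_mem (h ▸ hn)
    rw [h] at hm
    refine ⟨hm.2, fun j hj hmem => ?_⟩
    have : hackCycle X Y mm ω ≤ j := Nat.sInf_le hmem
    omega
  · rintro ⟨h1, h2⟩
    have hmem : n ∈ {k | 1 ≤ k ∧ cycleSum X mm k ω < Y k ω} := ⟨Nat.one_le_iff_ne_zero.2 hn, h1⟩
    have hle : hackCycle X Y mm ω ≤ n := Nat.sInf_le hmem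
    rcases Nat.lt_or_ge (hackCycle X Y mm ω) n with hlt | hge
    · exfalso
      have h0 : hackCycle X Y mm ω ≠ 0 := by
        intro h0
        rw [hackCycle_eq_zero_iff] at h0
        exact h0 n hmem
      exact h2 _ hlt (hackCycle_mem h0)
    · omega

lemma measurable_hackCycle (hXm : ∀ k i, Measurable (X k i)) (hYm : ∀ k, Measurable (Y k))
    (mm : ℕ) : Measurable (hackCycle X Y mm) := by
  apply measurable_to_countable'
  intro n
  rcases eq_or_ne n 0 with rfl | hn
  · have : hackCycle X Y mm ⁻¹' {0} = ⋂ k, {ω | 1 ≤ k ∧ cycleSum X mm k ω < Y k ω}ᶜ := by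
      ext ω
      simp only [Set.mem_preimage, Set.mem_singleton_iff, hackCycle_eq_zero_iff, Set.mem_iInter,
        Set.mem_compl_iff, Set.mem_setOf_eq]
    rw [this]
    refine MeasurableSet.iInter fun k => ?_
    refine MeasurableSet.compl ?_
    rcases Nat.lt_or_ge k 1 with hk | hk
    · have : {ω : Ω | 1 ≤ k ∧ cycleSum X mm k ω < Y k ω} = ∅ := by
        ext ω; simp only [Set.mem_setOf_eq, Set.mem_empty_iff_false, iff_false]; omega
      rw [this]; exact MeasurableSet.empty
    · have : {ω : Ω | 1 ≤ k ∧ cycleSum X mm k ω < Y k ω} = {ω | cycleSum X mm k ω < Y k ω} := by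
        ext ω; simp [hk]
      rw [this]; exact measurableSet_hackSet hXm hYm mm k
  · have : hackCycle X Y mm ⁻¹' {n} = {ω | cycleSum X mm n ω < Y n ω} ∩
        ⋂ j ∈ Finset.range n, {ω | 1 ≤ j ∧ cycleSum X mm j ω < Y j ω}ᶜ := by
      ext ω
      simp only [Set.mem_preimage, Set.mem_singleton_iff, hackCycle_eq_iff hn, Set.mem_inter_iff,
        Set.mem_setOf_eq, Set.mem_iInter, Finset.mem_range, Set.mem_compl_iff]
    rw [this]
    refine (measurableSet_hackSet hXm hYm mm n).inter ?_
    refine MeasurableSet.biInter (Finset.range n).countable_toSet fun j _ => ?_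
    refine MeasurableSet.compl ?_
    rcases Nat.lt_or_ge j 1 with hj | hj
    · have : {ω : Ω | 1 ≤ j ∧ cycleSum X mm j ω < Y j ω} = ∅ := by
        ext ω; simp only [Set.mem_setOf_eq, Set.mem_empty_iff_false, iff_false]; omega
      rw [this]; exact MeasurableSet.empty
    · have : {ω : Ω | 1 ≤ j ∧ cycleSum X mm j ω < Y j ω} = {ω | cycleSum X mm j ω < Y j ω} := by
        ext ω; simp [hj]
      rw [this]; exact measurableSet_hackSet hXm hYm mm j

lemma measurable_funcTime (hXm : ∀ k i, Measurable (X k i)) (hYm : ∀ k, Measurable (Y k))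
    (mm : ℕ) : Measurable (funcTime X Y mm) := by
  have : funcTime X Y mm = (fun p : Ω × ℕ =>
      if p.2 = 0 then (⊤ : ℝ≥0∞)
      else ENNReal.ofReal ((∑ k ∈ Finset.Ico 1 p.2, Y k p.1) + cycleSum X mm p.2 p.1)) ∘
      (fun ω => (ω, hackCycle X Y mm ω)) := rfl
  rw [this]
  refine Measurable.comp ?_ (measurable_id.prodMk (measurable_hackCycle hXm hYm mm))
  refine measurable_from_prod_countable_left fun n => ?_
  rcases eq_or_ne n 0 with rfl | hn
  · simp only [if_pos rfl]; exact measurable_const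
  · simp only [if_neg hn]
    exact ENNReal.measurable_ofReal.comp
      ((Finset.measurable_sum _ fun k _ => hYm k).add (measurable_cycleSum hXm mm n))

lemma ofReal_finset_sum_le (s : Finset ℕ) (f : ℕ → ℝ) :
    ENNReal.ofReal (∑ i ∈ s, f i) ≤ ∑ i ∈ s, ENNReal.ofReal (f i) := by
  classical
  induction s using Finset.induction_on with
  | empty => simp
  | insert _ _ h ih =>
    rw [Finset.sum_insert h, Finset.sum_insert h]
    exact le_trans ENNReal.ofReal_add_le (add_le_add_right ih _)

end Aux

/-! ### Block structure and independence -/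

section Blocks

set_option linter.unusedSectionVars false

/-- Index type of the joint family. -/
abbrev HIdx : Type := (ℕ × ℕ) ⊕ ℕ

/-- Indices used in cycle `k` with `mm` nodes. -/
def blockS (mm k : ℕ) : Finset HIdx :=
  ((Finset.range mm).image fun i => Sum.inl (k, i)) ∪ {Sum.inr k}

/-- Indices used in cycles `1, …, k-1`. -/
def blockT (mm k : ℕ) : Finset HIdx := (Finset.Ico 1 k).biUnion fun j => blockS mm j

lemma mem_blockS {mm k : ℕ} {x : HIdx} :
    x ∈ blockS mm k ↔ (∃ i < mm, x = Sum.inl (k, i)) ∨ x = Sum.inr k := by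
  simp only [blockS, Finset.mem_union, Finset.mem_image, Finset.mem_range,
    Finset.mem_singleton]
  constructor
  · rintro (⟨i, hi, rfl⟩ | rfl)
    · exact Or.inl ⟨i, hi, rfl⟩
    · exact Or.inr rfl
  · rintro (⟨i, hi, rfl⟩ | rfl)
    · exact Or.inl ⟨i, hi, rfl⟩
    · exact Or.inr rfl

lemma inl_mem_blockS {mm k i : ℕ} (hi : i < mm) : (Sum.inl (k, i) : HIdx) ∈ blockS mm k :=
  mem_blockS.2 (Or.inl ⟨i, hi, rfl⟩)

lemma inr_mem_blockS {mm k : ℕ} : (Sum.inr k : HIdx) ∈ blockS mm k := mem_blockS.2 (Or.inr rfl)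

lemma blockS_subset_blockT {mm k j : ℕ} (h1 : 1 ≤ j) (h2 : j < k) :
    blockS mm j ⊆ blockT mm k := fun x hx =>
  Finset.mem_biUnion.2 ⟨j, Finset.mem_Ico.2 ⟨h1, h2⟩, hx⟩

lemma disjoint_blockT_blockS (mm k : ℕ) : Disjoint (blockT mm k) (blockS mm k) := by
  rw [Finset.disjoint_left]
  intro x hx hx'
  rcases Finset.mem_biUnion.1 hx with ⟨j, hj, hxj⟩
  rw [Finset.mem_Ico] at hj
  rcases mem_blockS.1 hxj with ⟨i, _, rfl⟩ | rfl <;>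
    rcases mem_blockS.1 hx' with ⟨i', _, h⟩ | h <;> simp_all

/-- Extend a function defined on a finset of indices by `0`. -/
def extFun (T : Finset HIdx) (v : {x // x ∈ T} → ℝ) : HIdx → ℝ :=
  fun x => if h : x ∈ T then v ⟨x, h⟩ else 0

lemma measurable_extFun (T : Finset HIdx) : Measurable (extFun T) := by
  refine measurable_pi_lambda _ fun x => ?_
  unfold extFun
  split_ifs with h
  · exact measurable_pi_apply _
  · exact measurable_const

lemma extFun_restrict (T : Finset HIdx) (v : {x // x ∈ T} → ℝ) {x : HIdx} (hx : x ∈ T) :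
    extFun T v x = v ⟨x, hx⟩ := dif_pos hx

/-- The "detect beats hack in cycle `k`" condition as a predicate on full trajectories. -/
def condFun (mm k : ℕ) (u : HIdx → ℝ) : Prop :=
  ∑ i ∈ Finset.range mm, u (Sum.inl (k, i)) < u (Sum.inr k)

lemma measurableSet_condFun (mm k : ℕ) : MeasurableSet {u | condFun mm k u} := by
  apply measurableSet_lt
  · exact Finset.measurable_sum _ fun i _ => measurable_pi_apply (Sum.inl (k, i))
  · exact measurable_pi_apply (Sum.inr k)

variable {Ω : Type*} [MeasurableSpace Ω] {μ : Measure Ω}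
variable {X : ℕ → ℕ → Ω → ℝ} {Y : ℕ → Ω → ℝ}

lemma measurable_elim (hXm : ∀ k i, Measurable (X k i)) (hYm : ∀ k, Measurable (Y k)) :
    ∀ x : HIdx, Measurable (Sum.elim (fun p : ℕ × ℕ => X p.1 p.2) Y x) := by
  rintro (⟨k, i⟩ | k)
  · exact hXm k i
  · exact hYm k

lemma condFun_extFun {mm k : ℕ} {T : Finset HIdx} (hsub : blockS mm k ⊆ T) (ω : Ω) :
    condFun mm k (extFun T
      (fun x : {x // x ∈ T} => Sum.elim (fun p : ℕ × ℕ => X p.1 p.2) Y x ω))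
      ↔ cycleSum X mm k ω < Y k ω := by
  unfold condFun cycleSum
  rw [extFun_restrict T _ (hsub inr_mem_blockS),
    Finset.sum_congr rfl fun i hi =>
      extFun_restrict T _ (hsub (inl_mem_blockS (Finset.mem_range.1 hi)))]
  exact Iff.rfl

lemma ofReal_extFun {mm k : ℕ} (ω : Ω) :
    ENNReal.ofReal ((extFun (blockS mm k)
        (fun x : {x // x ∈ blockS mm k} => Sum.elim (fun p : ℕ × ℕ => X p.1 p.2) Y x ω))
        (Sum.inr k)
      + ∑ i ∈ Finset.range mm, (extFun (blockS mm k)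
        (fun x : {x // x ∈ blockS mm k} => Sum.elim (fun p : ℕ × ℕ => X p.1 p.2) Y x ω))
        (Sum.inl (k, i)))
      = ENNReal.ofReal (Y k ω + cycleSum X mm k ω) := by
  unfold cycleSum
  rw [extFun_restrict _ _ inr_mem_blockS,
    Finset.sum_congr rfl fun i hi =>
      extFun_restrict _ _ (inl_mem_blockS (Finset.mem_range.1 hi))]
  rfl

/-- Key independence: any `ℝ≥0∞`-valued functional of the cycles `< k` is independent of any
`ℝ≥0∞`-valued functional of cycle `k`. -/
lemma indep_past (hXm : ∀ k i, Measurable (X k i)) (hYm : ∀ k, Measurable (Y k))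
    (hindep : iIndepFun
      (Sum.elim (fun p : ℕ × ℕ => X p.1 p.2) Y) μ)
    (mm k : ℕ) (ψ φ : (HIdx → ℝ) → ℝ≥0∞) (hψ : Measurable ψ) (hφ : Measurable φ) :
    IndepFun
      (fun ω => ψ (extFun (blockT mm k)
        (fun x : {x // x ∈ blockT mm k} => Sum.elim (fun p : ℕ × ℕ => X p.1 p.2) Y x ω)))
      (fun ω => φ (extFun (blockS mm k)
        (fun x : {x // x ∈ blockS mm k} => Sum.elim (fun p : ℕ × ℕ => X p.1 p.2) Y x ω))) μ := by
  have base := hindep.indepFun_finset (blockT mm k) (blockS mm k)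
    (disjoint_blockT_blockS mm k) (measurable_elim hXm hYm)
  exact base.comp (hψ.comp (measurable_extFun _)) (hφ.comp (measurable_extFun _))

end Blocks

/-! ### Identical distribution of the cycle tuples -/

section Ident

set_option linter.unusedSectionVars false

variable {Ω : Type*} [MeasurableSpace Ω] {μ : Measure Ω}
variable {X : ℕ → ℕ → Ω → ℝ} {Y : ℕ → Ω → ℝ}

/-- The tuple of cycle-`k` variables. -/
def cycleTuple (X : ℕ → ℕ → Ω → ℝ) (Y : ℕ → Ω → ℝ) (mm k : ℕ) (ω : Ω) :
    Fin (mm + 1) → ℝ :=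
  fun i => if (i : ℕ) < mm then X k (i : ℕ) ω else Y k ω

lemma measurable_cycleTuple (hXm : ∀ k i, Measurable (X k i)) (hYm : ∀ k, Measurable (Y k))
    (mm k : ℕ) : Measurable (cycleTuple X Y mm k) := by
  refine measurable_pi_lambda _ fun i => ?_
  unfold cycleTuple
  split_ifs with h
  · exact hXm k i
  · exact hYm k

open Fin.NatCast in
lemma map_cycleTuple [IsProbabilityMeasure μ]
    (hXm : ∀ k i, Measurable (X k i)) (hYm : ∀ k, Measurable (Y k))
    (hindep : iIndepFun
      (Sum.elim (fun p : ℕ × ℕ => X p.1 p.2) Y) μ)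
    (hXid : ∀ k i, IdentDistrib (X k i) (X 1 0) μ μ)
    (hYid : ∀ k, IdentDistrib (Y k) (Y 1) μ μ)
    (mm k : ℕ) :
    μ.map (cycleTuple X Y mm k) = Measure.pi (fun i : Fin (mm + 1) =>
      if (i : ℕ) < mm then μ.map (X 1 0) else μ.map (Y 1)) := by
  set n := mm + 1 with hn
  haveI : NeZero n := ⟨by omega⟩
  set f := Sum.elim (fun p : ℕ × ℕ => X p.1 p.2) Y with hf
  have hfm : ∀ x : HIdx, Measurable (f x) := by
    rintro (⟨k', i⟩ | k')
    · exact hXm k' i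
    · exact hYm k'
  set νs : Fin n → Measure ℝ := fun i => if (i : ℕ) < mm then μ.map (X 1 0) else μ.map (Y 1)
    with hνs
  haveI : ∀ i, IsProbabilityMeasure (νs i) := by
    intro i
    rw [hνs]
    dsimp only
    split_ifs with h
    · exact Measure.isProbabilityMeasure_map (hXm 1 0).aemeasurable
    · exact Measure.isProbabilityMeasure_map (hYm 1).aemeasurable
  symm
  refine Measure.pi_eq fun s hs => ?_
  set idx : Fin n → HIdx := fun i => if (i : ℕ) < mm then Sum.inl (k, (i : ℕ)) else Sum.inr k
    with hidx
  have hval : ∀ i : Fin n, ¬ ((i : ℕ) < mm) → (i : ℕ) = mm := by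
    intro i h
    have := i.isLt
    omega
  have hidx_inj : Function.Injective idx := by
    intro i j hij
    have hij' : (if (i : ℕ) < mm then (Sum.inl (k, (i : ℕ)) : HIdx) else Sum.inr k) =
        (if (j : ℕ) < mm then (Sum.inl (k, (j : ℕ)) : HIdx) else Sum.inr k) := hij
    rcases Nat.lt_or_ge (i : ℕ) mm with h1 | h1 <;> rcases Nat.lt_or_ge (j : ℕ) mm with h2 | h2
    · rw [if_pos h1, if_pos h2] at hij'
      simp only [Sum.inl.injEq, Prod.mk.injEq] at hij'
      exact Fin.ext hij'.2
    · rw [if_pos h1, if_neg (Nat.not_lt.2 h2)] at hij'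
      exact absurd hij' (by simp)
    · rw [if_neg (Nat.not_lt.2 h1), if_pos h2] at hij'
      exact absurd hij' (by simp)
    · exact Fin.ext ((hval i (Nat.not_lt.2 h1)).trans (hval j (Nat.not_lt.2 h2)).symm)
  set sets' : HIdx → Set ℝ := fun x =>
    Sum.elim (fun p : ℕ × ℕ => if p.1 = k ∧ p.2 < mm then s ((p.2 : Fin n)) else Set.univ)
      (fun k' => if k' = k then s ((mm : Fin n)) else Set.univ) x with hsets'
  have hsets'_meas : ∀ x : HIdx, MeasurableSet (sets' x) := by
    rintro (⟨k', i⟩ | k') <;> rw [hsets'] <;>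
      simp only [Sum.elim_inl, Sum.elim_inr] <;> split_ifs <;>
      first | exact hs _ | exact MeasurableSet.univ
  have hkey : ∀ i : Fin n, sets' (idx i) = s i := by
    intro i
    rcases Nat.lt_or_ge (i : ℕ) mm with h | h
    · have hi : idx i = Sum.inl (k, (i : ℕ)) := if_pos h
      rw [hi]
      show (if k = k ∧ (i : ℕ) < mm then s (((i : ℕ) : Fin n)) else Set.univ) = s i
      rw [if_pos ⟨rfl, h⟩, Fin.cast_val_eq_self i]
    · have h' : ¬ ((i : ℕ) < mm) := Nat.not_lt.2 h
      have hi : idx i = Sum.inr k := if_neg h'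
      rw [hi]
      show (if k = k then s ((mm : Fin n)) else Set.univ) = s i
      rw [if_pos rfl]
      have hmi : ((mm : Fin n)) = i := by
        refine Fin.ext ?_
        rw [Fin.val_natCast, Nat.mod_eq_of_lt (by omega), hval i h']
      rw [hmi]
  have hpre : cycleTuple X Y mm k ⁻¹' Set.pi Set.univ s =
      ⋂ x ∈ Finset.univ.image idx, f x ⁻¹' sets' x := by
    ext ω
    simp only [Set.mem_preimage, Set.mem_pi, Set.mem_univ, true_imp_iff, Set.mem_iInter,
      Finset.mem_image, Finset.mem_univ, true_and]
    constructor
    · rintro h x ⟨i, rfl⟩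
      rw [hkey i]
      have hVi : f (idx i) ω = cycleTuple X Y mm k ω i := by
        rw [hidx]; unfold cycleTuple
        dsimp only
        split_ifs with hi
        · rfl
        · rfl
      rw [hVi]
      exact h i
    · intro h i
      have := h (idx i) ⟨i, rfl⟩
      rw [hkey i] at this
      have hVi : f (idx i) ω = cycleTuple X Y mm k ω i := by
        rw [hidx]; unfold cycleTuple
        dsimp only
        split_ifs with hi
        · rfl
        · rfl
      rwa [hVi] at this
  rw [Measure.map_apply (measurable_cycleTuple hXm hYm mm k) (MeasurableSet.univ_pi hs), hpre]
  rw [hindep.measure_inter_preimage_eq_mul (Finset.univ.image idx) (sets := sets')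
    (fun x _ => hsets'_meas x)]
  rw [Finset.prod_image (fun i _ j _ h => hidx_inj h)]
  refine Finset.prod_congr rfl fun i _ => ?_
  rw [hkey i, hνs, hidx]
  dsimp only
  split_ifs with h
  · show μ (X k (i : ℕ) ⁻¹' s i) = _
    rw [← Measure.map_apply (hXm k (i : ℕ)) (hs i), (hXid k (i : ℕ)).map_eq]
  · show μ (Y k ⁻¹' s i) = _
    rw [← Measure.map_apply (hYm k) (hs i), (hYid k).map_eq]

open Fin.NatCast in
lemma measure_hackSet_eq [IsProbabilityMeasure μ]
    (hXm : ∀ k i, Measurable (X k i)) (hYm : ∀ k, Measurable (Y k))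
    (hindep : iIndepFun
      (Sum.elim (fun p : ℕ × ℕ => X p.1 p.2) Y) μ)
    (hXid : ∀ k i, IdentDistrib (X k i) (X 1 0) μ μ)
    (hYid : ∀ k, IdentDistrib (Y k) (Y 1) μ μ)
    (mm k : ℕ) :
    μ {ω | cycleSum X mm k ω < Y k ω} = μ {ω | cycleSum X mm 1 ω < Y 1 ω} := by
  set n := mm + 1 with hn
  haveI : NeZero n := ⟨by omega⟩
  set Eset : Set (Fin n → ℝ) :=
    {v | (∑ i ∈ Finset.range mm, v ((i : Fin n))) < v ((mm : Fin n))} with hE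
  have hEm : MeasurableSet Eset := by
    apply measurableSet_lt
    · exact Finset.measurable_sum _ fun i _ => measurable_pi_apply _
    · exact measurable_pi_apply _
  have hpre : ∀ k', {ω | cycleSum X mm k' ω < Y k' ω} = cycleTuple X Y mm k' ⁻¹' Eset := by
    intro k'
    ext ω
    simp only [Set.mem_setOf_eq, Set.mem_preimage, hE]
    unfold cycleSum
    have h1 : ∀ i ∈ Finset.range mm, cycleTuple X Y mm k' ω ((i : Fin n)) = X k' i ω := by
      intro i hi
      rw [Finset.mem_range] at hi
      unfold cycleTuple
      have hv : (((i : Fin n)) : ℕ) = i := by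
        rw [Fin.val_natCast, Nat.mod_eq_of_lt (by omega)]
      rw [if_pos (by rw [hv]; exact hi), hv]
    have h2 : cycleTuple X Y mm k' ω ((mm : Fin n)) = Y k' ω := by
      unfold cycleTuple
      have hv : (((mm : Fin n)) : ℕ) = mm := by
        rw [Fin.val_natCast, Nat.mod_eq_of_lt (by omega)]
      rw [if_neg (by rw [hv]; omega)]
    rw [Set.mem_setOf_eq, Finset.sum_congr rfl h1, h2]
  rw [hpre k, hpre 1,
    ← Measure.map_apply (measurable_cycleTuple hXm hYm mm k) hEm,
    ← Measure.map_apply (measurable_cycleTuple hXm hYm mm 1) hEm,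
    map_cycleTuple hXm hYm hindep hXid hYid mm k,
    map_cycleTuple hXm hYm hindep hXid hYid mm 1]

end Ident


/-! ### Wald-type estimates -/

section Wald

set_option linter.unusedSectionVars false

variable {Ω : Type*} [MeasurableSpace Ω] {μ : Measure Ω}
variable {X : ℕ → ℕ → Ω → ℝ} {Y : ℕ → Ω → ℝ}

/-- The event that no detection-win happens in cycles `1, …, k-1`. -/
def safeSet (X : ℕ → ℕ → Ω → ℝ) (Y : ℕ → Ω → ℝ) (m k : ℕ) : Set Ω :=
  {ω | ∀ j ∈ Finset.Ico 1 k, ¬ (cycleSum X m j ω < Y j ω)}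

lemma measurableSet_safeSet (hXm : ∀ k i, Measurable (X k i)) (hYm : ∀ k, Measurable (Y k))
    (mm k : ℕ) : MeasurableSet (safeSet X Y mm k) := by
  have : safeSet X Y mm k = ⋂ j ∈ (Finset.Ico 1 k : Finset ℕ),
      {ω | cycleSum X mm j ω < Y j ω}ᶜ := by
    ext ω
    simp [safeSet]
  rw [this]
  exact MeasurableSet.biInter (Finset.Ico 1 k).countable_toSet
    fun j _ => (measurableSet_hackSet hXm hYm mm j).compl

lemma measurableSet_safeSetCond (mm k : ℕ) :
    MeasurableSet {u : HIdx → ℝ | ∀ j ∈ Finset.Ico 1 k, ¬ condFun mm j u} := by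
  have : {u : HIdx → ℝ | ∀ j ∈ Finset.Ico 1 k, ¬ condFun mm j u} =
      ⋂ j ∈ (Finset.Ico 1 k : Finset ℕ), {u | condFun mm j u}ᶜ := by
    ext u; simp
  rw [this]
  exact MeasurableSet.biInter (Finset.Ico 1 k).countable_toSet
    fun j _ => (measurableSet_condFun mm j).compl

lemma comp_safeSet (mm k : ℕ) :
    (fun ω => Set.indicator {u : HIdx → ℝ | ∀ j ∈ Finset.Ico 1 k, ¬ condFun mm j u}
        (1 : (HIdx → ℝ) → ℝ≥0∞)
        (extFun (blockT mm k)
          (fun x : {x // x ∈ blockT mm k} => Sum.elim (fun p : ℕ × ℕ => X p.1 p.2) Y x ω)))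
      = (safeSet X Y mm k).indicator (1 : Ω → ℝ≥0∞) := by
  funext ω
  have hiff : (extFun (blockT mm k)
      (fun x : {x // x ∈ blockT mm k} => Sum.elim (fun p : ℕ × ℕ => X p.1 p.2) Y x ω))
        ∈ {u : HIdx → ℝ | ∀ j ∈ Finset.Ico 1 k, ¬ condFun mm j u}
      ↔ ω ∈ safeSet X Y mm k := by
    simp only [Set.mem_setOf_eq, safeSet]
    refine forall₂_congr fun j hj => ?_
    rw [condFun_extFun
      (blockS_subset_blockT (Finset.mem_Ico.1 hj).1 (Finset.mem_Ico.1 hj).2)]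
  classical
  rw [Set.indicator_apply, Set.indicator_apply, if_congr hiff rfl rfl]
  simp

lemma comp_hackSetCompl (mm k : ℕ) :
    (fun ω => Set.indicator {u : HIdx → ℝ | ¬ condFun mm k u} (1 : (HIdx → ℝ) → ℝ≥0∞)
        (extFun (blockS mm k)
          (fun x : {x // x ∈ blockS mm k} => Sum.elim (fun p : ℕ × ℕ => X p.1 p.2) Y x ω)))
      = ({ω | cycleSum X mm k ω < Y k ω}ᶜ).indicator (1 : Ω → ℝ≥0∞) := by
  funext ω
  have hiff : (extFun (blockS mm k)
      (fun x : {x // x ∈ blockS mm k} => Sum.elim (fun p : ℕ × ℕ => X p.1 p.2) Y x ω))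
        ∈ {u : HIdx → ℝ | ¬ condFun mm k u}
      ↔ ω ∈ {ω | cycleSum X mm k ω < Y k ω}ᶜ := by
    simp only [Set.mem_setOf_eq, Set.mem_compl_iff]
    rw [condFun_extFun (le_refl (blockS mm k))]
  classical
  rw [Set.indicator_apply, Set.indicator_apply, if_congr hiff rfl rfl]
  simp

lemma comp_gFun (mm k : ℕ) :
    (fun ω => (fun u : HIdx → ℝ =>
        ENNReal.ofReal (u (Sum.inr k) + ∑ i ∈ Finset.range mm, u (Sum.inl (k, i))))
        (extFun (blockS mm k)
          (fun x : {x // x ∈ blockS mm k} => Sum.elim (fun p : ℕ × ℕ => X p.1 p.2) Y x ω)))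
      = (fun ω => ENNReal.ofReal (Y k ω + cycleSum X mm k ω)) := by
  funext ω
  exact ofReal_extFun ω

lemma indepFun_safeSet_hackSetCompl
    (hXm : ∀ k i, Measurable (X k i)) (hYm : ∀ k, Measurable (Y k))
    (hindep : iIndepFun
      (Sum.elim (fun p : ℕ × ℕ => X p.1 p.2) Y) μ) (mm k : ℕ) :
    IndepFun ((safeSet X Y mm k).indicator (1 : Ω → ℝ≥0∞))
      (({ω | cycleSum X mm k ω < Y k ω}ᶜ).indicator (1 : Ω → ℝ≥0∞)) μ := by
  have h := indep_past hXm hYm hindep mm k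
    (Set.indicator {u : HIdx → ℝ | ∀ j ∈ Finset.Ico 1 k, ¬ condFun mm j u} 1)
    (Set.indicator {u : HIdx → ℝ | ¬ condFun mm k u} 1)
    (measurable_one.indicator (measurableSet_safeSetCond mm k))
    (measurable_one.indicator (measurableSet_condFun mm k).compl)
  rwa [comp_safeSet mm k, comp_hackSetCompl mm k] at h

lemma indepFun_safeSet_gFun
    (hXm : ∀ k i, Measurable (X k i)) (hYm : ∀ k, Measurable (Y k))
    (hindep : iIndepFun
      (Sum.elim (fun p : ℕ × ℕ => X p.1 p.2) Y) μ) (mm k : ℕ) :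
    IndepFun ((safeSet X Y mm k).indicator (1 : Ω → ℝ≥0∞))
      (fun ω => ENNReal.ofReal (Y k ω + cycleSum X mm k ω)) μ := by
  have h := indep_past hXm hYm hindep mm k
    (Set.indicator {u : HIdx → ℝ | ∀ j ∈ Finset.Ico 1 k, ¬ condFun mm j u} 1)
    (fun u : HIdx → ℝ =>
      ENNReal.ofReal (u (Sum.inr k) + ∑ i ∈ Finset.range mm, u (Sum.inl (k, i))))
    (measurable_one.indicator (measurableSet_safeSetCond mm k))
    (ENNReal.measurable_ofReal.comp ((measurable_pi_apply _).add
      (Finset.measurable_sum _ fun i _ => measurable_pi_apply (Sum.inl (k, i)))))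
  rwa [comp_safeSet mm k, comp_gFun mm k] at h

lemma measure_inter_of_indicator_indep {s t : Set Ω} (hs : MeasurableSet s)
    (ht : MeasurableSet t)
    (h : IndepFun (s.indicator (1 : Ω → ℝ≥0∞)) (t.indicator (1 : Ω → ℝ≥0∞)) μ) :
    μ (s ∩ t) = μ s * μ t := by
  have hmul : (s ∩ t).indicator (1 : Ω → ℝ≥0∞) =
      s.indicator (1 : Ω → ℝ≥0∞) * t.indicator (1 : Ω → ℝ≥0∞) := by
    funext ω
    by_cases hs' : ω ∈ s <;> by_cases ht' : ω ∈ t <;>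
      simp [Set.indicator_apply, hs', ht']
  rw [← lintegral_indicator_one (hs.inter ht), hmul,
    lintegral_mul_eq_lintegral_mul_lintegral_of_indepFun
      (measurable_one.indicator hs) (measurable_one.indicator ht) h,
    lintegral_indicator_one hs, lintegral_indicator_one ht]

lemma measure_safeSet_eq [IsProbabilityMeasure μ]
    (hXm : ∀ k i, Measurable (X k i)) (hYm : ∀ k, Measurable (Y k))
    (hindep : iIndepFun
      (Sum.elim (fun p : ℕ × ℕ => X p.1 p.2) Y) μ)
    (hXid : ∀ k i, IdentDistrib (X k i) (X 1 0) μ μ)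
    (hYid : ∀ k, IdentDistrib (Y k) (Y 1) μ μ)
    (mm : ℕ) (j : ℕ) :
    μ (safeSet X Y mm (j + 1)) = μ ({ω | cycleSum X mm 1 ω < Y 1 ω}ᶜ) ^ j := by
  induction j with
  | zero =>
    have : safeSet X Y mm 1 = Set.univ := by
      ext ω; simp [safeSet]
    rw [this, pow_zero, measure_univ]
  | succ j ih =>
    have hsplit : safeSet X Y mm (j + 2) = safeSet X Y mm (j + 1) ∩
        {ω | cycleSum X mm (j + 1) ω < Y (j + 1) ω}ᶜ := by
      ext ω
      simp only [safeSet, Set.mem_inter_iff, Set.mem_compl_iff, Set.mem_setOf_eq,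
        Finset.mem_Ico]
      constructor
      · intro h
        exact ⟨fun i hi => h i ⟨hi.1, by omega⟩, h (j + 1) ⟨by omega, by omega⟩⟩
      · rintro ⟨h1, h2⟩ i hi
        rcases Nat.lt_succ_iff_lt_or_eq.1 hi.2 with hlt | rfl
        · exact h1 i ⟨hi.1, hlt⟩
        · exact h2
    have hcompl : μ ({ω | cycleSum X mm (j + 1) ω < Y (j + 1) ω}ᶜ) =
        μ ({ω | cycleSum X mm 1 ω < Y 1 ω}ᶜ) := by
      rw [measure_compl (measurableSet_hackSet hXm hYm mm (j + 1)) (measure_ne_top μ _),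
        measure_compl (measurableSet_hackSet hXm hYm mm 1) (measure_ne_top μ _),
        measure_hackSet_eq hXm hYm hindep hXid hYid mm (j + 1)]
    rw [hsplit,
      measure_inter_of_indicator_indep (measurableSet_safeSet hXm hYm mm (j + 1))
        (measurableSet_hackSet hXm hYm mm (j + 1)).compl
        (indepFun_safeSet_hackSetCompl hXm hYm hindep mm (j + 1)),
      ih, hcompl, pow_succ]

end Wald

set_option maxHeartbeats 1000000 in
/-- Theorem 3.1, mean functional time part: if `X` and `Y` are integrable
and `p_{m+1} > 0`, then `E[T_{m+1}] > E[T_m]`. -/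
theorem stmt_14
{Ω : Type*} [MeasurableSpace Ω] (μ : Measure Ω) [IsProbabilityMeasure μ]
    (X : ℕ → ℕ → Ω → ℝ) (Y : ℕ → Ω → ℝ)
    (hXm : ∀ k i, Measurable (X k i)) (hYm : ∀ k, Measurable (Y k))
    (hindep : iIndepFun
      (Sum.elim (fun p : ℕ × ℕ => X p.1 p.2) Y) μ)
    (hXid : ∀ k i, IdentDistrib (X k i) (X 1 0) μ μ)
    (hYid : ∀ k, IdentDistrib (Y k) (Y 1) μ μ)
    (hXpos : ∀ k i, ∀ᵐ ω ∂μ, 0 < X k i ω)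
    (hYpos : ∀ k, ∀ᵐ ω ∂μ, 0 < Y k ω)
    (hXint : Integrable (X 1 0) μ) (hYint : Integrable (Y 1) μ)
    (m : ℕ) (hm : 1 ≤ m)
    (hp : 0 < μ {ω | cycleSum X (m + 1) 1 ω < Y 1 ω}) :
    ∫⁻ ω, funcTime X Y m ω ∂μ < ∫⁻ ω, funcTime X Y (m + 1) ω ∂μ := by
  classical
  -- notation
  have hAmeas : ∀ k, MeasurableSet {ω | cycleSum X m k ω < Y k ω} :=
    fun k => measurableSet_hackSet hXm hYm m k
  have hBmeas : ∀ k, MeasurableSet (safeSet X Y m k) :=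
    fun k => measurableSet_safeSet hXm hYm m k
  -- p_m > 0
  have hA1pos : 0 < μ {ω | cycleSum X m 1 ω < Y 1 ω} := by
    refine lt_of_lt_of_le hp (measure_mono_ae ?_)
    filter_upwards [hXpos 1 m] with ω hX hmem
    have hsum : cycleSum X (m + 1) 1 ω = cycleSum X m 1 ω + X 1 m ω := by
      simp [cycleSum, Finset.sum_range_succ]
    have hmem' : cycleSum X (m + 1) 1 ω < Y 1 ω := hmem
    rw [hsum] at hmem'
    show cycleSum X m 1 ω < Y 1 ω
    linarith
  set r : ℝ≥0∞ := μ ({ω | cycleSum X m 1 ω < Y 1 ω}ᶜ) with hrdef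
  have hrlt : r < 1 := by
    rw [hrdef, measure_compl (hAmeas 1) (measure_ne_top μ _), measure_univ]
    exact ENNReal.sub_lt_self ENNReal.one_ne_top one_ne_zero hA1pos.ne'
  have hBr : ∀ j : ℕ, μ (safeSet X Y m (j + 1)) = r ^ j := fun j =>
    measure_safeSet_eq hXm hYm hindep hXid hYid m j
  -- a.e. positivity of all variables
  have hXae : ∀ᵐ ω ∂μ, ∀ k i, 0 < X k i ω :=
    ae_all_iff.2 fun k => ae_all_iff.2 fun i => hXpos k i
  have hYae : ∀ᵐ ω ∂μ, ∀ k, 0 < Y k ω := ae_all_iff.2 fun k => hYpos k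
  have hNne : ∀ᵐ ω ∂μ, hackCycle X Y m ω ≠ 0 := by
    have hsub : ∀ j : ℕ, {ω | hackCycle X Y m ω = 0} ⊆ safeSet X Y m (j + 1) := by
      intro j ω hω
      rw [Set.mem_setOf_eq, hackCycle_eq_zero_iff] at hω
      intro i hi
      rcases Finset.mem_Ico.1 hi with ⟨hi1, _⟩
      intro hcon
      exact hω i ⟨hi1, hcon⟩
    have hle : μ {ω | hackCycle X Y m ω = 0} ≤ 0 := by
      refine ge_of_tendsto' (ENNReal.tendsto_pow_atTop_nhds_zero_of_lt_one hrlt) fun j => ?_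
      rw [← hBr j]
      exact measure_mono (hsub j)
    have h0 : μ {ω | hackCycle X Y m ω = 0} = 0 := le_antisymm hle zero_le
    rw [ae_iff]
    simpa using h0
  -- the per-cycle cost and its integral bound
  set g : ℕ → Ω → ℝ≥0∞ := fun k ω => ENNReal.ofReal (Y k ω + cycleSum X m k ω) with hgdef
  have hgm : ∀ k, Measurable (g k) := fun k =>
    ENNReal.measurable_ofReal.comp ((hYm k).add (measurable_cycleSum hXm m k))
  set C : ℝ≥0∞ := ∫⁻ ω, ENNReal.ofReal (Y 1 ω) ∂μ
      + m * ∫⁻ ω, ENNReal.ofReal (X 1 0 ω) ∂μ with hCdef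
  have hCne : C ≠ ∞ := by
    rw [hCdef]
    refine (ENNReal.add_lt_top.2 ⟨hYint.lintegral_lt_top, ?_⟩).ne
    exact ENNReal.mul_lt_top (by simp) hXint.lintegral_lt_top
  have hgC : ∀ k, ∫⁻ ω, g k ω ∂μ ≤ C := by
    intro k
    have hYeq : ∫⁻ ω, ENNReal.ofReal (Y k ω) ∂μ = ∫⁻ ω, ENNReal.ofReal (Y 1 ω) ∂μ := by
      rw [← lintegral_map ENNReal.measurable_ofReal (hYm k), (hYid k).map_eq,
        lintegral_map ENNReal.measurable_ofReal (hYm 1)]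
    have hXeq : ∀ i, ∫⁻ ω, ENNReal.ofReal (X k i ω) ∂μ
        = ∫⁻ ω, ENNReal.ofReal (X 1 0 ω) ∂μ := by
      intro i
      rw [← lintegral_map ENNReal.measurable_ofReal (hXm k i), (hXid k i).map_eq,
        lintegral_map ENNReal.measurable_ofReal (hXm 1 0)]
    calc ∫⁻ ω, g k ω ∂μ
        ≤ ∫⁻ ω, (ENNReal.ofReal (Y k ω)
            + ∑ i ∈ Finset.range m, ENNReal.ofReal (X k i ω)) ∂μ := by
          refine lintegral_mono fun ω => ?_
          refine le_trans ENNReal.ofReal_add_le (add_le_add_right ?_ _)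
          exact ofReal_finset_sum_le _ _
      _ = ∫⁻ ω, ENNReal.ofReal (Y k ω) ∂μ
            + ∑ i ∈ Finset.range m, ∫⁻ ω, ENNReal.ofReal (X k i ω) ∂μ := by
          rw [lintegral_add_left ((hYm k).ennreal_ofReal),
            lintegral_finset_sum _ fun i _ => ((hXm k i).ennreal_ofReal)]
      _ = C := by
          rw [hYeq, Finset.sum_congr rfl fun i _ => hXeq i, Finset.sum_const,
            Finset.card_range, nsmul_eq_mul, hCdef]
  -- finiteness of the mean functional time for m nodes
  have hTfin : ∫⁻ ω, funcTime X Y m ω ∂μ < ∞ := by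
    have hBim : ∀ k, Measurable ((safeSet X Y m k).indicator (1 : Ω → ℝ≥0∞)) :=
      fun k => measurable_one.indicator (hBmeas k)
    have hbound : ∀ᵐ ω ∂μ, funcTime X Y m ω
        ≤ ∑' k, (safeSet X Y m k).indicator (1 : Ω → ℝ≥0∞) ω * g k ω := by
      filter_upwards [hXae, hYae, hNne] with ω hXa hYa hN
      set n := hackCycle X Y m ω with hndef
      have hn1 : 1 ≤ n := (hackCycle_mem hN).1
      have hBmem : ∀ k, k ≤ n → ω ∈ safeSet X Y m k := by
        intro k hk j hj
        rcases Finset.mem_Ico.1 hj with ⟨hj1, hj2⟩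
        exact hackCycle_min hj1 (by omega)
      have hterm : ∀ k ∈ Finset.Ico 1 n, ENNReal.ofReal (Y k ω)
          ≤ (safeSet X Y m k).indicator (1 : Ω → ℝ≥0∞) ω * g k ω := by
        intro k hk
        rw [Set.indicator_of_mem (hBmem k (le_of_lt (Finset.mem_Ico.1 hk).2)), Pi.one_apply,
          one_mul]
        refine ENNReal.ofReal_le_ofReal (le_add_of_nonneg_right ?_)
        exact Finset.sum_nonneg fun i _ => (hXa k i).le
      have hlast : ENNReal.ofReal (cycleSum X m n ω)
          ≤ (safeSet X Y m n).indicator (1 : Ω → ℝ≥0∞) ω * g n ω := by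
        rw [Set.indicator_of_mem (hBmem n le_rfl), Pi.one_apply, one_mul]
        exact ENNReal.ofReal_le_ofReal (le_add_of_nonneg_left (hYa n).le)
      calc funcTime X Y m ω
          = ENNReal.ofReal ((∑ k ∈ Finset.Ico 1 n, Y k ω) + cycleSum X m n ω) := by
            rw [funcTime, if_neg hN]
        _ ≤ (∑ k ∈ Finset.Ico 1 n, ENNReal.ofReal (Y k ω))
              + ENNReal.ofReal (cycleSum X m n ω) :=
            le_trans ENNReal.ofReal_add_le (add_le_add_left (ofReal_finset_sum_le _ _) _)
        _ ≤ (∑ k ∈ Finset.Ico 1 n, (safeSet X Y m k).indicator (1 : Ω → ℝ≥0∞) ω * g k ω)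
              + (safeSet X Y m n).indicator (1 : Ω → ℝ≥0∞) ω * g n ω :=
            add_le_add (Finset.sum_le_sum hterm) hlast
        _ = ∑ k ∈ Finset.Ico 1 (n + 1),
              (safeSet X Y m k).indicator (1 : Ω → ℝ≥0∞) ω * g k ω :=
            (Finset.sum_Ico_succ_top hn1 _).symm
        _ ≤ _ := ENNReal.sum_le_tsum _
    have hprod : ∀ k, ∫⁻ ω, (safeSet X Y m k).indicator (1 : Ω → ℝ≥0∞) ω * g k ω ∂μ
        = μ (safeSet X Y m k) * ∫⁻ ω, g k ω ∂μ := by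
      intro k
      have := lintegral_mul_eq_lintegral_mul_lintegral_of_indepFun (hBim k) (hgm k)
        (indepFun_safeSet_gFun hXm hYm hindep m k)
      rw [show ∫⁻ ω, (safeSet X Y m k).indicator (1 : Ω → ℝ≥0∞) ω * g k ω ∂μ
          = ∫⁻ ω, ((safeSet X Y m k).indicator (1 : Ω → ℝ≥0∞) * g k) ω ∂μ from rfl, this,
        lintegral_indicator_one (hBmeas k)]
    calc ∫⁻ ω, funcTime X Y m ω ∂μ
        ≤ ∫⁻ ω, ∑' k, (safeSet X Y m k).indicator (1 : Ω → ℝ≥0∞) ω * g k ω ∂μ :=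
          lintegral_mono_ae hbound
      _ = ∑' k, ∫⁻ ω, (safeSet X Y m k).indicator (1 : Ω → ℝ≥0∞) ω * g k ω ∂μ :=
          lintegral_tsum fun k => ((hBim k).mul (hgm k)).aemeasurable
      _ = ∑' k, μ (safeSet X Y m k) * ∫⁻ ω, g k ω ∂μ := tsum_congr hprod
      _ ≤ ∑' k, μ (safeSet X Y m k) * C :=
          ENNReal.tsum_le_tsum fun k => mul_le_mul_right (hgC k) _
      _ = μ (safeSet X Y m 0) * C + ∑' j, μ (safeSet X Y m (j + 1)) * C :=
          tsum_eq_zero_add' ENNReal.summable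
      _ = μ (safeSet X Y m 0) * C + (∑' j, r ^ j) * C := by
          rw [← ENNReal.tsum_mul_right]
          exact congrArg _ (tsum_congr fun j => by rw [hBr j])
      _ = μ (safeSet X Y m 0) * C + (1 - r)⁻¹ * C := by rw [ENNReal.tsum_geometric]
      _ < ∞ := by
          refine ENNReal.add_lt_top.2 ⟨?_, ?_⟩
          · exact ENNReal.mul_lt_top (measure_lt_top μ _) hCne.lt_top
          · refine ENNReal.mul_lt_top ?_ hCne.lt_top
            rw [ENNReal.inv_lt_top]
            exact tsub_pos_of_lt hrlt
  -- a.e. strict comparison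
  have hlt : ∀ᵐ ω ∂μ, funcTime X Y m ω < funcTime X Y (m + 1) ω := by
    filter_upwards [hXae, hYae, hNne] with ω hXa hYa hN
    set n := hackCycle X Y m ω with hndef
    have hn1 : 1 ≤ n := (hackCycle_mem hN).1
    have hYn : cycleSum X m n ω < Y n ω := (hackCycle_mem hN).2
    have hYsum_nonneg : 0 ≤ ∑ k ∈ Finset.Ico 1 n, Y k ω :=
      Finset.sum_nonneg fun k _ => (hYa k).le
    have hcs_nonneg : ∀ mm k, 0 ≤ cycleSum X mm k ω := fun mm k =>
      Finset.sum_nonneg fun i _ => (hXa k i).le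
    have harg_nonneg : 0 ≤ (∑ k ∈ Finset.Ico 1 n, Y k ω) + cycleSum X m n ω :=
      add_nonneg hYsum_nonneg (hcs_nonneg m n)
    have hsucc : ∀ k, cycleSum X (m + 1) k ω = cycleSum X m k ω + X k m ω := by
      intro k; simp [cycleSum, Finset.sum_range_succ]
    rcases eq_or_ne (hackCycle X Y (m + 1) ω) 0 with hN' | hN'
    · rw [funcTime, funcTime, if_pos hN', if_neg hN]
      exact ENNReal.ofReal_lt_top
    · set n' := hackCycle X Y (m + 1) ω with hn'def
      have hn'mem := hackCycle_mem (X := X) (Y := Y) hN'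
      have hnn' : n ≤ n' := by
        by_contra hcon
        push_neg at hcon
        refine hackCycle_min hn'mem.1 hcon ?_
        have := hn'mem.2
        rw [hsucc n'] at this
        have := hXa n' m
        linarith
      rw [funcTime, funcTime, if_neg hN, if_neg hN', ← hndef, ← hn'def]
      rcases eq_or_lt_of_le hnn' with heq | hlt'
      · rw [← heq]
        refine (ENNReal.ofReal_lt_ofReal_iff_of_nonneg harg_nonneg).2 ?_
        rw [hsucc n]
        have := hXa n m
        linarith
      · refine (ENNReal.ofReal_lt_ofReal_iff_of_nonneg harg_nonneg).2 ?_
        have h1 : ∑ k ∈ Finset.Ico 1 (n + 1), Y k ω ≤ ∑ k ∈ Finset.Ico 1 n', Y k ω := by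
          refine Finset.sum_le_sum_of_subset_of_nonneg
            (Finset.Ico_subset_Ico le_rfl hlt') fun i _ _ => (hYa i).le
        rw [Finset.sum_Ico_succ_top hn1] at h1
        have h2 : 0 ≤ cycleSum X (m + 1) n' ω := hcs_nonneg (m + 1) n'
        linarith
  -- combine
  have hTm : Measurable (funcTime X Y m) := measurable_funcTime hXm hYm m
  have hTm' : Measurable (funcTime X Y (m + 1)) := measurable_funcTime hXm hYm (m + 1)
  have hDm : Measurable (fun ω => funcTime X Y (m + 1) ω - funcTime X Y m ω) :=
    hTm'.sub hTm
  have hDpos : ∀ᵐ ω ∂μ, 0 < funcTime X Y (m + 1) ω - funcTime X Y m ω := by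
    filter_upwards [hlt, hNne] with ω h hN
    have hfin : funcTime X Y m ω ≠ ⊤ := by
      rw [funcTime, if_neg hN]
      exact ENNReal.ofReal_ne_top
    exact tsub_pos_of_lt h
  have hDint : 0 < ∫⁻ ω, (funcTime X Y (m + 1) ω - funcTime X Y m ω) ∂μ := by
    rcases eq_or_ne (∫⁻ ω, (funcTime X Y (m + 1) ω - funcTime X Y m ω) ∂μ) 0 with h0 | h0
    · exfalso
      rw [lintegral_eq_zero_iff hDm] at h0
      have := hDpos.and h0
      rcases this.exists with ⟨ω, hω1, hω2⟩
      have hω2' : funcTime X Y (m + 1) ω - funcTime X Y m ω = 0 := hω2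
      rw [hω2'] at hω1
      exact lt_irrefl 0 hω1
    · exact pos_iff_ne_zero.2 h0
  have haeT' : funcTime X Y (m + 1) =ᵐ[μ]
      fun ω => (funcTime X Y (m + 1) ω - funcTime X Y m ω) + funcTime X Y m ω := by
    filter_upwards [hlt] with ω h
    rw [tsub_add_cancel_of_le h.le]
  rw [lintegral_congr_ae haeT', lintegral_add_right _ hTm, add_comm]
  exact ENNReal.lt_add_right hTfin.ne hDint.ne'
end

section
/- (Theorem 3.2, probability part.) For every fixed t > 0, the instantaneous functional probability tends to one as the number of nodes grows: lim_{m→∞} P(T_m > t) = 1, i.e. lim_{m→∞} P_m(t) = 1. -/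
open MeasureTheory ProbabilityTheory Filter
open scoped ENNReal Topology

lemma aux_lintegral_prod {Ω ι : Type*} [MeasurableSpace Ω] {μ : Measure Ω} [IsProbabilityMeasure μ]
    {f : ι → Ω → ℝ≥0∞}
    (hindep : iIndepFun f μ)
    (hmeas : ∀ i, Measurable (f i)) (s : Finset ι) :
    ∫⁻ ω, ∏ i ∈ s, f i ω ∂μ = ∏ i ∈ s, ∫⁻ ω, f i ω ∂μ := by
  classical
  induction s using Finset.cons_induction with
  | empty => simp
  | cons i s hi ih =>
    have hIndep2 : IndepFun (∏ j ∈ s, f j) (f i) μ :=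
      hindep.indepFun_finset_prod_of_notMem hmeas hi
    have hpm : Measurable (∏ j ∈ s, f j) := by
      have h : Measurable fun ω => ∏ j ∈ s, f j ω := Finset.measurable_prod s fun j _ => hmeas j
      simpa only [← Finset.prod_apply] using h
    have hmul := lintegral_mul_eq_lintegral_mul_lintegral_of_indepFun hpm (hmeas i) hIndep2
    simp only [Pi.mul_apply, Finset.prod_apply] at hmul
    simp only [Finset.prod_cons]
    rw [← ih]
    calc ∫⁻ ω, f i ω * ∏ j ∈ s, f j ω ∂μ
        = ∫⁻ ω, (∏ j ∈ s, f j ω) * f i ω ∂μ := by simp_rw [mul_comm]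
      _ = (∫⁻ ω, ∏ j ∈ s, f j ω ∂μ) * ∫⁻ ω, f i ω ∂μ := hmul
      _ = (∫⁻ ω, f i ω ∂μ) * ∫⁻ ω, ∏ j ∈ s, f j ω ∂μ := mul_comm _ _

lemma aux_chernoff {Ω ι : Type*} [MeasurableSpace Ω] {μ : Measure Ω} [IsProbabilityMeasure μ]
    {F : ι → Ω → ℝ}
    (hindep : iIndepFun F μ)
    (hFm : ∀ i, Measurable (F i)) (s : Finset ι) (t : ℝ) :
    μ {ω | ∑ i ∈ s, F i ω ≤ t}
      ≤ ENNReal.ofReal (Real.exp t)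
        * ∏ i ∈ s, ∫⁻ ω, ENNReal.ofReal (Real.exp (-(F i ω))) ∂μ := by
  classical
  set φ : ℝ → ℝ≥0∞ := fun x => ENNReal.ofReal (Real.exp (-x)) with hφdef
  have hφ : Measurable φ := ENNReal.measurable_ofReal.comp (Real.measurable_exp.comp measurable_neg)
  have hgindep : iIndepFun
      (fun i => φ ∘ F i) μ := hindep.comp (fun _ => φ) (fun _ => hφ)
  have hgm : ∀ i, Measurable (φ ∘ F i) := fun i => hφ.comp (hFm i)
  have hprod : ∫⁻ ω, ∏ i ∈ s, φ (F i ω) ∂μ = ∏ i ∈ s, ∫⁻ ω, φ (F i ω) ∂μ :=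
    aux_lintegral_prod hgindep hgm s
  set ε : ℝ≥0∞ := ENNReal.ofReal (Real.exp (-t)) with hεdef
  have hεpos : 0 < ε := ENNReal.ofReal_pos.mpr (Real.exp_pos _)
  have hsub : {ω | ∑ i ∈ s, F i ω ≤ t} ⊆ {ω | ε ≤ ∏ i ∈ s, φ (F i ω)} := by
    intro ω hω
    have hω' : ∑ i ∈ s, F i ω ≤ t := hω
    have h1 : Real.exp (-t) ≤ Real.exp (-(∑ i ∈ s, F i ω)) :=
      Real.exp_le_exp.mpr (by linarith)
    have h2 : Real.exp (-(∑ i ∈ s, F i ω)) = ∏ i ∈ s, Real.exp (-(F i ω)) := by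
      rw [Real.exp_neg, Real.exp_sum, ← Finset.prod_inv_distrib]
      simp [Real.exp_neg]
    have h3 : ENNReal.ofReal (∏ i ∈ s, Real.exp (-(F i ω)))
        = ∏ i ∈ s, φ (F i ω) :=
      ENNReal.ofReal_prod_of_nonneg fun i _ => (Real.exp_pos _).le
    calc ε ≤ ENNReal.ofReal (∏ i ∈ s, Real.exp (-(F i ω))) :=
          ENNReal.ofReal_le_ofReal (h1.trans_eq h2)
      _ = _ := h3
  have hpam : AEMeasurable (fun ω => ∏ i ∈ s, φ (F i ω)) μ :=
    (Finset.measurable_prod s fun i _ => hgm i).aemeasurable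
  have hmarkov := mul_meas_ge_le_lintegral₀ (μ := μ) hpam ε
  have hεinv : ε⁻¹ = ENNReal.ofReal (Real.exp t) := by
    rw [hεdef, ← ENNReal.ofReal_inv_of_pos (Real.exp_pos _), Real.exp_neg, inv_inv]
  calc μ {ω | ∑ i ∈ s, F i ω ≤ t}
      ≤ μ {ω | ε ≤ ∏ i ∈ s, φ (F i ω)} := measure_mono hsub
    _ = ε⁻¹ * (ε * μ {ω | ε ≤ ∏ i ∈ s, φ (F i ω)}) := by
        rw [← mul_assoc, ENNReal.inv_mul_cancel hεpos.ne' ENNReal.ofReal_ne_top, one_mul]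
    _ ≤ ε⁻¹ * ∫⁻ ω, ∏ i ∈ s, φ (F i ω) ∂μ := mul_le_mul_right hmarkov _
    _ = ENNReal.ofReal (Real.exp t) * ∏ i ∈ s, ∫⁻ ω, φ (F i ω) ∂μ := by
        rw [hεinv, hprod]

lemma aux_exp_lt_one {Ω : Type*} [MeasurableSpace Ω] {μ : Measure Ω} [IsProbabilityMeasure μ]
    {f : Ω → ℝ} (_hf : Measurable f) (hpos : ∀ᵐ ω ∂μ, 0 < f ω) :
    ∫⁻ ω, ENNReal.ofReal (Real.exp (-(f ω))) ∂μ < 1 := by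
  have hle : ∫⁻ ω, ENNReal.ofReal (Real.exp (-(f ω))) ∂μ ≤ 1 := by
    calc ∫⁻ ω, ENNReal.ofReal (Real.exp (-(f ω))) ∂μ
        ≤ ∫⁻ _, 1 ∂μ := lintegral_mono_ae (hpos.mono fun ω hω =>
          ENNReal.ofReal_le_one.mpr (Real.exp_le_one_iff.mpr (by linarith)))
      _ = 1 := by simp
  have hstrict := lintegral_strict_mono (μ := μ)
    (f := fun ω => ENNReal.ofReal (Real.exp (-(f ω)))) (g := fun _ => (1 : ℝ≥0∞))
    (IsProbabilityMeasure.ne_zero μ) aemeasurable_const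
    (hle.trans_lt ENNReal.one_lt_top).ne
    (hpos.mono fun ω hω =>
      ENNReal.ofReal_lt_one.mpr (Real.exp_lt_one_iff.mpr (by linarith)))
  simpa using hstrict

/-- Theorem 3.2, probability part: for every fixed `t > 0`,
`lim_{m→∞} P(T_m > t) = 1`. -/
theorem stmt_15
{Ω : Type*} [MeasurableSpace Ω] (μ : Measure Ω) [IsProbabilityMeasure μ]
    (X : ℕ → ℕ → Ω → ℝ) (Y : ℕ → Ω → ℝ)
    (hXm : ∀ k i, Measurable (X k i)) (hYm : ∀ k, Measurable (Y k))
    (hindep : iIndepFun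
      (Sum.elim (fun p : ℕ × ℕ => X p.1 p.2) Y) μ)
    (hXid : ∀ k i, IdentDistrib (X k i) (X 1 0) μ μ)
    (hYid : ∀ k, IdentDistrib (Y k) (Y 1) μ μ)
    (hXpos : ∀ k i, ∀ᵐ ω ∂μ, 0 < X k i ω)
    (hYpos : ∀ k, ∀ᵐ ω ∂μ, 0 < Y k ω)
    (t : ℝ) (ht : 0 < t) :
    Tendsto (fun m => μ {ω | ENNReal.ofReal t < funcTime X Y m ω}) atTop (𝓝 1) := by
  classical
  set F : (ℕ × ℕ) ⊕ ℕ → Ω → ℝ := Sum.elim (fun p : ℕ × ℕ => X p.1 p.2) Y with hF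
  have hFm : ∀ j, Measurable (F j) := by rintro (p | k); exacts [hXm p.1 p.2, hYm k]
  have hφ : Measurable fun x : ℝ => ENNReal.ofReal (Real.exp (-x)) :=
    ENNReal.measurable_ofReal.comp (Real.measurable_exp.comp measurable_neg)
  set c : ℝ≥0∞ := ∫⁻ ω, ENNReal.ofReal (Real.exp (-(X 1 0 ω))) ∂μ with hc
  set c' : ℝ≥0∞ := ∫⁻ ω, ENNReal.ofReal (Real.exp (-(Y 1 ω))) ∂μ with hc'
  have hclt : c < 1 := aux_exp_lt_one (hXm 1 0) (hXpos 1 0)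
  have hc'lt : c' < 1 := aux_exp_lt_one (hYm 1) (hYpos 1)
  set C : ℝ≥0∞ := ENNReal.ofReal (Real.exp t) with hC
  have hCne : C ≠ ⊤ := ENNReal.ofReal_ne_top
  -- Chernoff bound for the cycle sums
  have hB : ∀ m k, μ {ω | cycleSum X m k ω ≤ t} ≤ C * c ^ m := by
    intro m k
    have emb : Function.Injective (fun i : ℕ => (Sum.inl (k, i) : (ℕ × ℕ) ⊕ ℕ)) := by
      intro a b hab; simpa using hab
    have h := aux_chernoff hindep hFm ((Finset.range m).map ⟨_, emb⟩) t
    simp only [Finset.sum_map, Finset.prod_map, Function.Embedding.coeFn_mk] at h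
    have hFX : ∀ i ω, F (Sum.inl (k, i)) ω = X k i ω := fun i ω => rfl
    simp only [hFX] at h
    have hprod : ∏ i ∈ Finset.range m,
        ∫⁻ ω, ENNReal.ofReal (Real.exp (-(X k i ω))) ∂μ = c ^ m := by
      calc ∏ i ∈ Finset.range m, ∫⁻ ω, ENNReal.ofReal (Real.exp (-(X k i ω))) ∂μ
          = ∏ _i ∈ Finset.range m, c :=
            Finset.prod_congr rfl fun i _ => ((hXid k i).comp hφ).lintegral_eq
        _ = c ^ m := by simp
    rw [hprod] at h
    exact h
  -- Chernoff bound for the detection sums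
  have hA : ∀ K, μ {ω | ∑ k ∈ Finset.Ico 1 K, Y k ω ≤ t} ≤ C * c' ^ (K - 1) := by
    intro K
    have emb : Function.Injective (fun k : ℕ => (Sum.inr k : (ℕ × ℕ) ⊕ ℕ)) := by
      intro a b hab; simpa using hab
    have h := aux_chernoff hindep hFm ((Finset.Ico 1 K).map ⟨_, emb⟩) t
    simp only [Finset.sum_map, Finset.prod_map, Function.Embedding.coeFn_mk] at h
    have hFY : ∀ k ω, F (Sum.inr k) ω = Y k ω := fun k ω => rfl
    simp only [hFY] at h
    have hprod : ∏ k ∈ Finset.Ico 1 K,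
        ∫⁻ ω, ENNReal.ofReal (Real.exp (-(Y k ω))) ∂μ = c' ^ (K - 1) := by
      calc ∏ k ∈ Finset.Ico 1 K, ∫⁻ ω, ENNReal.ofReal (Real.exp (-(Y k ω))) ∂μ
          = ∏ _k ∈ Finset.Ico 1 K, c' :=
            Finset.prod_congr rfl fun k _ => ((hYid k).comp hφ).lintegral_eq
        _ = c' ^ (K - 1) := by simp [Nat.card_Ico]
    rw [hprod] at h
    exact h
  -- each cycleSum event tends to 0
  have hBtend : ∀ k, Tendsto (fun m => μ {ω | cycleSum X m k ω ≤ t}) atTop (𝓝 0) := by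
    intro k
    have hpow : Tendsto (fun m : ℕ => C * c ^ m) atTop (𝓝 0) := by
      have := ENNReal.Tendsto.const_mul
        (ENNReal.tendsto_pow_atTop_nhds_zero_of_lt_one hclt) (Or.inr hCne)
      simpa using this
    exact tendsto_of_tendsto_of_tendsto_of_le_of_le tendsto_const_nhds hpow
      (fun m => zero_le) (fun m => hB m k)
  -- the detection-sum bound tends to 0 in K
  have hAtend : Tendsto (fun K : ℕ => C * c' ^ (K - 1)) atTop (𝓝 0) := by
    have h1 : Tendsto (fun K : ℕ => c' ^ (K - 1)) atTop (𝓝 0) :=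
      (ENNReal.tendsto_pow_atTop_nhds_zero_of_lt_one hc'lt).comp
        (tendsto_sub_atTop_nat 1)
    have := ENNReal.Tendsto.const_mul h1 (Or.inr hCne)
    simpa using this
  -- a.e. positivity set
  have hae : ∀ᵐ ω ∂μ, (∀ k i, 0 < X k i ω) ∧ (∀ k, 0 < Y k ω) :=
    ((ae_all_iff.mpr fun k => ae_all_iff.mpr fun i => hXpos k i).and (ae_all_iff.mpr hYpos))
  have hGnull : μ {ω | ¬((∀ k i, 0 < X k i ω) ∧ (∀ k, 0 < Y k ω))} = 0 := ae_iff.mp hae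
  -- pointwise inclusion for the bad event
  have hbadsub : ∀ m K, {ω | funcTime X Y m ω ≤ ENNReal.ofReal t}
      ∩ {ω | (∀ k i, 0 < X k i ω) ∧ (∀ k, 0 < Y k ω)}
      ⊆ {ω | ∑ k ∈ Finset.Ico 1 K, Y k ω ≤ t}
        ∪ ⋃ k ∈ Finset.Ico 1 K, {ω | cycleSum X m k ω ≤ t} := by
    rintro m K ω ⟨hbad, hXp, hYp⟩
    have hbad' : funcTime X Y m ω ≤ ENNReal.ofReal t := hbad
    set N := hackCycle X Y m ω with hN
    by_cases hN0 : N = 0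
    · exfalso
      have : funcTime X Y m ω = ⊤ := by simp [funcTime, ← hN, hN0]
      rw [this] at hbad'
      exact ENNReal.ofReal_ne_top (top_le_iff.mp hbad')
    · have hft : funcTime X Y m ω
          = ENNReal.ofReal ((∑ k ∈ Finset.Ico 1 N, Y k ω) + cycleSum X m N ω) := by
        simp [funcTime, ← hN, hN0]
      rw [hft] at hbad'
      have hS : (∑ k ∈ Finset.Ico 1 N, Y k ω) + cycleSum X m N ω ≤ t :=
        (ENNReal.ofReal_le_ofReal_iff ht.le).mp hbad'
      have hY0 : 0 ≤ ∑ k ∈ Finset.Ico 1 N, Y k ω :=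
        Finset.sum_nonneg fun k _ => (hYp k).le
      have hC0 : 0 ≤ cycleSum X m N ω :=
        Finset.sum_nonneg fun i _ => (hXp N i).le
      by_cases hNK : N < K
      · right
        refine Set.mem_biUnion (Finset.mem_Ico.mpr ⟨Nat.one_le_iff_ne_zero.mpr hN0, hNK⟩) ?_
        show cycleSum X m N ω ≤ t
        linarith
      · left
        show ∑ k ∈ Finset.Ico 1 K, Y k ω ≤ t
        have hsub : Finset.Ico 1 K ⊆ Finset.Ico 1 N :=
          Finset.Ico_subset_Ico le_rfl (not_lt.mp hNK)
        have := Finset.sum_le_sum_of_subset_of_nonneg hsub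
          (fun k _ _ => (hYp k).le)
        linarith
  -- measure bound for the bad event
  have hbad_le : ∀ m K, μ {ω | funcTime X Y m ω ≤ ENNReal.ofReal t}
      ≤ μ {ω | ∑ k ∈ Finset.Ico 1 K, Y k ω ≤ t}
        + ∑ k ∈ Finset.Ico 1 K, μ {ω | cycleSum X m k ω ≤ t} := by
    intro m K
    set bad := {ω | funcTime X Y m ω ≤ ENNReal.ofReal t}
    set G := {ω | (∀ k i, 0 < X k i ω) ∧ (∀ k, 0 < Y k ω)}
    calc μ bad ≤ μ ((bad ∩ G) ∪ Gᶜ) := measure_mono fun ω hω => by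
          by_cases hG : ω ∈ G
          · exact Or.inl ⟨hω, hG⟩
          · exact Or.inr hG
      _ ≤ μ (bad ∩ G) + μ Gᶜ := measure_union_le _ _
      _ = μ (bad ∩ G) := by
          have : μ Gᶜ = 0 := hGnull
          rw [this, add_zero]
      _ ≤ μ ({ω | ∑ k ∈ Finset.Ico 1 K, Y k ω ≤ t}
            ∪ ⋃ k ∈ Finset.Ico 1 K, {ω | cycleSum X m k ω ≤ t}) :=
          measure_mono (hbadsub m K)
      _ ≤ μ {ω | ∑ k ∈ Finset.Ico 1 K, Y k ω ≤ t}
            + μ (⋃ k ∈ Finset.Ico 1 K, {ω | cycleSum X m k ω ≤ t}) := measure_union_le _ _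
      _ ≤ _ := add_le_add_right (measure_biUnion_finset_le _ _) _
  -- the bad event tends to 0
  have hbadtend : Tendsto (fun m => μ {ω | funcTime X Y m ω ≤ ENNReal.ofReal t})
      atTop (𝓝 0) := by
    rw [ENNReal.tendsto_nhds_zero]
    intro ε hε
    have hε2 : (0 : ℝ≥0∞) < ε / 2 := ENNReal.half_pos hε.ne'
    obtain ⟨K, hK⟩ := (ENNReal.tendsto_nhds_zero.mp hAtend (ε / 2) hε2).exists
    have hAK : μ {ω | ∑ k ∈ Finset.Ico 1 K, Y k ω ≤ t} ≤ ε / 2 := (hA K).trans hK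
    have hsumtend : Tendsto
        (fun m => ∑ k ∈ Finset.Ico 1 K, μ {ω | cycleSum X m k ω ≤ t}) atTop (𝓝 0) := by
      have := tendsto_finset_sum (Finset.Ico 1 K) fun k _ => hBtend k
      simpa using this
    filter_upwards [ENNReal.tendsto_nhds_zero.mp hsumtend (ε / 2) hε2] with m hm
    calc μ {ω | funcTime X Y m ω ≤ ENNReal.ofReal t}
        ≤ μ {ω | ∑ k ∈ Finset.Ico 1 K, Y k ω ≤ t}
          + ∑ k ∈ Finset.Ico 1 K, μ {ω | cycleSum X m k ω ≤ t} := hbad_le m K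
      _ ≤ ε / 2 + ε / 2 := add_le_add hAK hm
      _ = ε := ENNReal.add_halves ε
  -- conclude
  have hset : ∀ m, {ω | ENNReal.ofReal t < funcTime X Y m ω}
      = {ω | funcTime X Y m ω ≤ ENNReal.ofReal t}ᶜ := by
    intro m; ext ω; simp [not_le]
  have hlow : ∀ m, 1 - μ {ω | funcTime X Y m ω ≤ ENNReal.ofReal t}
      ≤ μ {ω | ENNReal.ofReal t < funcTime X Y m ω} := by
    intro m
    rw [hset m]
    refine tsub_le_iff_right.mpr ?_
    calc (1 : ℝ≥0∞) = μ Set.univ := measure_univ.symm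
      _ = μ ({ω | funcTime X Y m ω ≤ ENNReal.ofReal t}ᶜ
          ∪ {ω | funcTime X Y m ω ≤ ENNReal.ofReal t}) := by rw [Set.compl_union_self]
      _ ≤ _ := measure_union_le _ _
  have h1 : Tendsto (fun m => 1 - μ {ω | funcTime X Y m ω ≤ ENNReal.ofReal t})
      atTop (𝓝 1) := by
    have := ENNReal.Tendsto.sub (tendsto_const_nhds (x := (1 : ℝ≥0∞)))
      hbadtend (Or.inl ENNReal.one_ne_top)
    simpa using this
  exact tendsto_of_tendsto_of_tendsto_of_le_of_le h1 tendsto_const_nhds hlow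
    (fun m => prob_le_one)
end

section
/- (Theorem 3.2, mean functional time part.) If in addition p_m = P(Y_1 > S^{(1)}_m) > 0 for every m, then the mean functional time diverges as the number of nodes grows: lim_{m→∞} E[T_m] = ∞ (the expectations taken in the extended nonnegative reals). -/
open MeasureTheory ProbabilityTheory Filter
open scoped ENNReal Topology

/-- Auxiliary: by the strong law of large numbers, the cycle sums tend to infinity a.s. -/
lemma aux_cycleSum_tendsto {Ω : Type*} [MeasurableSpace Ω] (μ : Measure Ω)
    [IsProbabilityMeasure μ]
    (X : ℕ → ℕ → Ω → ℝ) (Y : ℕ → Ω → ℝ)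
    (hXm : ∀ k i, Measurable (X k i))
    (hindep : iIndepFun
      (Sum.elim (fun p : ℕ × ℕ => X p.1 p.2) Y) μ)
    (hXid : ∀ k i, IdentDistrib (X k i) (X 1 0) μ μ)
    (hXpos : ∀ k i, ∀ᵐ ω ∂μ, 0 < X k i ω) (k : ℕ) :
    ∀ᵐ ω ∂μ, Tendsto (fun m => cycleSum X m k ω) atTop atTop := by
  classical
  set Z : ℕ → Ω → ℝ := fun i ω => min (X k i ω) 1 with hZdef
  have hmin : Measurable fun x : ℝ => min x 1 := measurable_id.min measurable_const
  have hZm : ∀ i, Measurable (Z i) := fun i => (hXm k i).min measurable_const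
  have hZint : ∀ i, Integrable (Z i) μ := by
    intro i
    refine (integrable_const (1 : ℝ)).mono' (hZm i).aestronglyMeasurable ?_
    filter_upwards [hXpos k i] with ω h
    rw [Real.norm_eq_abs, abs_le]
    exact ⟨by have := le_min h.le zero_le_one; linarith, min_le_right _ _⟩
  have hZindep : Pairwise (Function.onFun (IndepFun · · μ) Z) := by
    intro i j hij
    have h1 : IndepFun (X k i) (X k j) μ :=
      hindep.indepFun (i := Sum.inl (k, i)) (j := Sum.inl (k, j)) (by simp [hij])
    exact h1.comp hmin hmin
  have hZid : ∀ i, IdentDistrib (Z i) (Z 0) μ μ := fun i =>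
    (((hXid k i).trans (hXid k 0).symm).comp hmin)
  have hcpos : 0 < μ[Z 0] := by
    rw [integral_pos_iff_support_of_nonneg_ae ?_ (hZint 0)]
    · refine lt_of_lt_of_le ?_ (measure_mono ?_ (s := {ω | 0 < X k 0 ω}))
      · have h0 : μ {ω | ¬ 0 < X k 0 ω} = 0 := ae_iff.mp (hXpos k 0)
        have : μ Set.univ ≤ μ {ω | 0 < X k 0 ω} + μ {ω | ¬ 0 < X k 0 ω} := by
          refine le_trans (measure_mono fun ω _ => ?_) (measure_union_le _ _)
          by_cases h : 0 < X k 0 ω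
          · exact Or.inl h
          · exact Or.inr h
        rw [h0, add_zero, measure_univ] at this
        exact lt_of_lt_of_le zero_lt_one this
      · intro ω hω
        simp only [Function.mem_support, hZdef]
        have : (0:ℝ) < min (X k 0 ω) 1 := lt_min hω zero_lt_one
        exact ne_of_gt this
    · filter_upwards [hXpos k 0] with ω h
      exact (lt_min h zero_lt_one).le
  have hSL := strong_law_ae Z (hZint 0) hZindep hZid
  filter_upwards [hSL] with ω hω
  have h1 : Tendsto (fun n : ℕ => (n : ℝ) * ((n : ℝ)⁻¹ • ∑ i ∈ Finset.range n, Z i ω))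
      atTop atTop := tendsto_natCast_atTop_atTop.atTop_mul_pos hcpos hω
  have h2 : Tendsto (fun n : ℕ => ∑ i ∈ Finset.range n, Z i ω) atTop atTop := by
    refine h1.congr' ?_
    filter_upwards [eventually_ge_atTop 1] with n hn
    have hn0 : (n : ℝ) ≠ 0 := Nat.cast_ne_zero.2 (by omega)
    rw [smul_eq_mul]; field_simp
  refine tendsto_atTop_mono (fun n => ?_) h2
  exact Finset.sum_le_sum fun i _ => min_le_left _ _

/-- Auxiliary: the probability that detection in cycle `k` beats the `m` hacking times
tends to `0` as `m → ∞`. -/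
lemma aux_measure_tendsto_zero {Ω : Type*} [MeasurableSpace Ω] (μ : Measure Ω)
    [IsProbabilityMeasure μ]
    (X : ℕ → ℕ → Ω → ℝ) (Y : ℕ → Ω → ℝ)
    (hXm : ∀ k i, Measurable (X k i)) (hYm : ∀ k, Measurable (Y k))
    (hindep : iIndepFun
      (Sum.elim (fun p : ℕ × ℕ => X p.1 p.2) Y) μ)
    (hXid : ∀ k i, IdentDistrib (X k i) (X 1 0) μ μ)
    (hXpos : ∀ k i, ∀ᵐ ω ∂μ, 0 < X k i ω) (k : ℕ) :
    Tendsto (fun m => μ {ω | cycleSum X m k ω < Y k ω}) atTop (𝓝 0) := by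
  classical
  have hSm : ∀ m, Measurable (fun ω => cycleSum X m k ω) := by
    intro m
    exact Finset.measurable_sum _ fun i _ => hXm k i
  have hmeas : ∀ m, MeasurableSet {ω | cycleSum X m k ω < Y k ω} := fun m =>
    measurableSet_lt (hSm m) (hYm k)
  have key : Tendsto (fun m => ∫⁻ ω, ({ω | cycleSum X m k ω < Y k ω}).indicator
      (fun _ => (1:ℝ≥0∞)) ω ∂μ) atTop (𝓝 (∫⁻ _, (0:ℝ≥0∞) ∂μ)) := by
    refine tendsto_lintegral_of_dominated_convergence (fun _ => (1:ℝ≥0∞))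
      (fun m => measurable_const.indicator (hmeas m)) (fun m => ?_) ?_ ?_
    · refine Eventually.of_forall fun ω => ?_
      by_cases h : ω ∈ {ω | cycleSum X m k ω < Y k ω}
      · simp [Set.indicator_of_mem h]
      · simp [Set.indicator_of_notMem h]
    · simp
    · filter_upwards [aux_cycleSum_tendsto μ X Y hXm hindep hXid hXpos k] with ω hω
      have hev : ∀ᶠ m in atTop, ({ω | cycleSum X m k ω < Y k ω}).indicator
          (fun _ => (1:ℝ≥0∞)) ω = 0 := by
        filter_upwards [hω.eventually_ge_atTop (Y k ω)] with m hm
        exact Set.indicator_of_notMem (by simpa using not_lt.2 hm) _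
      exact Tendsto.congr' (hev.mono fun m hm => hm.symm) tendsto_const_nhds
  simp only [lintegral_zero] at key
  refine key.congr fun m => ?_
  exact lintegral_indicator_one (hmeas m)

/-- Theorem 3.2, mean functional time part: if `p_m > 0` for every `m`,
then `lim_{m→∞} E[T_m] = ∞` (expectations in the extended nonnegative reals). -/
theorem stmt_16
{Ω : Type*} [MeasurableSpace Ω] (μ : Measure Ω) [IsProbabilityMeasure μ]
    (X : ℕ → ℕ → Ω → ℝ) (Y : ℕ → Ω → ℝ)
    (hXm : ∀ k i, Measurable (X k i)) (hYm : ∀ k, Measurable (Y k))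
    (hindep : iIndepFun
      (Sum.elim (fun p : ℕ × ℕ => X p.1 p.2) Y) μ)
    (hXid : ∀ k i, IdentDistrib (X k i) (X 1 0) μ μ)
    (hYid : ∀ k, IdentDistrib (Y k) (Y 1) μ μ)
    (hXpos : ∀ k i, ∀ᵐ ω ∂μ, 0 < X k i ω)
    (hYpos : ∀ k, ∀ᵐ ω ∂μ, 0 < Y k ω)
    (hp : ∀ m, 1 ≤ m → 0 < μ {ω | cycleSum X m 1 ω < Y 1 ω}) :
    Tendsto (fun m => ∫⁻ ω, funcTime X Y m ω ∂μ) atTop (𝓝 ⊤) := by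
  classical
  set c : ℝ≥0∞ := ∫⁻ ω, ENNReal.ofReal (min (Y 1 ω) 1) ∂μ with hcdef
  have hfm : ∀ k, Measurable fun ω => ENNReal.ofReal (min (Y k ω) 1) := fun k =>
    ((hYm k).min measurable_const).ennreal_ofReal
  have hc_pos : 0 < c := by
    rw [hcdef, lintegral_pos_iff_support (hfm 1)]
    refine lt_of_lt_of_le ?_ (measure_mono ?_ (s := {ω | 0 < Y 1 ω}))
    · have h0 : μ {ω | ¬ 0 < Y 1 ω} = 0 := ae_iff.mp (hYpos 1)
      have : μ Set.univ ≤ μ {ω | 0 < Y 1 ω} + μ {ω | ¬ 0 < Y 1 ω} := by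
        refine le_trans (measure_mono fun ω _ => ?_) (measure_union_le _ _)
        by_cases h : 0 < Y 1 ω
        · exact Or.inl h
        · exact Or.inr h
      rw [h0, add_zero, measure_univ] at this
      exact lt_of_lt_of_le zero_lt_one this
    · intro ω hω
      simp only [Function.mem_support]
      simp only [ne_eq, ENNReal.ofReal_eq_zero, not_le]
      exact lt_min hω zero_lt_one
  have hc_le_one : c ≤ 1 := by
    rw [hcdef]
    calc ∫⁻ ω, ENNReal.ofReal (min (Y 1 ω) 1) ∂μ
        ≤ ∫⁻ _, (1:ℝ≥0∞) ∂μ := by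
          refine lintegral_mono fun ω => ?_
          calc ENNReal.ofReal (min (Y 1 ω) 1) ≤ ENNReal.ofReal 1 :=
                ENNReal.ofReal_le_ofReal (min_le_right _ _)
            _ = 1 := ENNReal.ofReal_one
      _ = 1 := by simp
  have hc_ne_top : c ≠ ⊤ := (lt_of_le_of_lt hc_le_one ENNReal.one_lt_top).ne
  have hc_eq : ∀ k, ∫⁻ ω, ENNReal.ofReal (min (Y k ω) 1) ∂μ = c := by
    intro k
    have hu : Measurable fun y : ℝ => ENNReal.ofReal (min y 1) :=
      (measurable_id.min measurable_const).ennreal_ofReal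
    exact ((hYid k).comp hu).lintegral_eq
  rw [ENNReal.tendsto_nhds_top_iff_nat]
  intro n
  -- choose K with (n+1 : ℝ≥0∞) < K * c
  obtain ⟨K, hK⟩ : ∃ K : ℕ, ((n : ℝ≥0∞) + 1) / c < K :=
    ENNReal.exists_nat_gt (by
      exact (ENNReal.div_lt_top (by simp) hc_pos.ne').ne)
  have hKc : (n : ℝ≥0∞) + 1 < K * c := by
    rwa [ENNReal.div_lt_iff (Or.inl hc_pos.ne') (Or.inl hc_ne_top)] at hK
  -- the bad sets
  set B : ℕ → Set Ω := fun m => ⋃ k ∈ Finset.Ico 1 (K+1), {ω | cycleSum X m k ω < Y k ω}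
    with hBdef
  have hSm : ∀ m k, Measurable (fun ω => cycleSum X m k ω) := by
    intro m k
    exact Finset.measurable_sum _ fun i _ => hXm k i
  have hBk_meas : ∀ m k, MeasurableSet {ω | cycleSum X m k ω < Y k ω} := fun m k =>
    measurableSet_lt (hSm m k) (hYm k)
  have hBmeas : ∀ m, MeasurableSet (B m) := fun m =>
    (Finset.Ico 1 (K+1)).measurableSet_biUnion fun k _ => hBk_meas m k
  -- the good function
  set g : Ω → ℝ≥0∞ := fun ω => ∑ k ∈ Finset.Ico 1 (K+1), ENNReal.ofReal (min (Y k ω) 1)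
    with hgdef
  have hgm : Measurable g := Finset.measurable_sum _ fun k _ => hfm k
  have hg_int : ∫⁻ ω, g ω ∂μ = K * c := by
    rw [hgdef]
    rw [lintegral_finset_sum _ fun k _ => hfm k]
    simp only [hc_eq]
    rw [Finset.sum_const, Nat.card_Ico, Nat.add_sub_cancel, nsmul_eq_mul]
  have hg_le : ∀ ω, g ω ≤ (K : ℝ≥0∞) := by
    intro ω
    calc g ω ≤ (Finset.Ico 1 (K+1)).card • (1:ℝ≥0∞) := by
          refine Finset.sum_le_card_nsmul _ _ _ fun k _ => ?_
          calc ENNReal.ofReal (min (Y k ω) 1) ≤ ENNReal.ofReal 1 :=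
                ENNReal.ofReal_le_ofReal (min_le_right _ _)
            _ = 1 := ENNReal.ofReal_one
      _ = (K : ℝ≥0∞) := by simp [Nat.card_Ico]
  -- pointwise lower bound
  have hptwise : ∀ m, ∀ᵐ ω ∂μ, (B m)ᶜ.indicator g ω ≤ funcTime X Y m ω := by
    intro m
    have hYall : ∀ᵐ ω ∂μ, ∀ k, 0 < Y k ω := ae_all_iff.2 hYpos
    have hXall : ∀ᵐ ω ∂μ, ∀ k i, 0 < X k i ω := ae_all_iff.2 fun k => ae_all_iff.2 (hXpos k)
    filter_upwards [hYall, hXall] with ω hY hX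
    by_cases hmem : ω ∈ (B m)ᶜ
    swap
    · rw [Set.indicator_of_notMem hmem]; exact zero_le
    rw [Set.indicator_of_mem hmem]
    rcases Nat.eq_zero_or_pos (hackCycle X Y m ω) with hN | hN
    · rw [funcTime, if_pos hN]; exact le_top
    · set N := hackCycle X Y m ω with hNdef
      have hne : {k | 1 ≤ k ∧ cycleSum X m k ω < Y k ω}.Nonempty := by
        by_contra h
        rw [Set.not_nonempty_iff_eq_empty] at h
        have : N = 0 := by rw [hNdef, hackCycle, h, Nat.sInf_empty]
        omega
      have hNmem : 1 ≤ N ∧ cycleSum X m N ω < Y N ω := Nat.sInf_mem hne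
      have hNK : K + 1 ≤ N := by
        by_contra h
        push_neg at h
        have : ω ∈ B m := by
          rw [hBdef]
          simp only [Set.mem_iUnion, Set.mem_setOf_eq]
          exact ⟨N, by simp only [Finset.mem_Ico]; omega, hNmem.2⟩
        exact hmem this
      rw [funcTime, if_neg (by omega), ← hNdef]
      have hstep1 : g ω ≤ ∑ k ∈ Finset.Ico 1 N, ENNReal.ofReal (Y k ω) := by
        calc g ω ≤ ∑ k ∈ Finset.Ico 1 (K+1), ENNReal.ofReal (Y k ω) := by
              refine Finset.sum_le_sum fun k _ => ?_
              exact ENNReal.ofReal_le_ofReal (min_le_left _ _)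
          _ ≤ ∑ k ∈ Finset.Ico 1 N, ENNReal.ofReal (Y k ω) := by
              refine Finset.sum_le_sum_of_subset ?_
              exact Finset.Ico_subset_Ico le_rfl hNK
      refine hstep1.trans ?_
      rw [← ENNReal.ofReal_sum_of_nonneg fun k _ => (hY k).le]
      refine ENNReal.ofReal_le_ofReal ?_
      have hS0 : 0 ≤ cycleSum X m N ω :=
        Finset.sum_nonneg fun i _ => (hX N i).le
      linarith
  -- the convergence of bad measures
  have hBad : Tendsto (fun m => (K:ℝ≥0∞) * ∑ k ∈ Finset.Ico 1 (K+1),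
      μ {ω | cycleSum X m k ω < Y k ω}) atTop (𝓝 0) := by
    have hsum : Tendsto (fun m => ∑ k ∈ Finset.Ico 1 (K+1),
        μ {ω | cycleSum X m k ω < Y k ω}) atTop (𝓝 0) := by
      have := tendsto_finset_sum (Finset.Ico 1 (K+1))
        (fun k _ => aux_measure_tendsto_zero μ X Y hXm hYm hindep hXid hXpos k)
      simpa using this
    have := ENNReal.Tendsto.const_mul hsum (Or.inr (by simp : (K:ℝ≥0∞) ≠ ⊤))
    simpa using this
  have hev : ∀ᶠ m in atTop, (K:ℝ≥0∞) * ∑ k ∈ Finset.Ico 1 (K+1),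
      μ {ω | cycleSum X m k ω < Y k ω} < 1 :=
    hBad.eventually_lt_const zero_lt_one
  filter_upwards [hev] with m hm
  -- assemble
  have hKB : (K:ℝ≥0∞) * μ (B m) < 1 := by
    refine lt_of_le_of_lt ?_ hm
    refine mul_le_mul_right ?_ _
    exact measure_biUnion_finset_le _ _
  have hint1 : ∫⁻ ω in (B m)ᶜ, g ω ∂μ ≤ ∫⁻ ω, funcTime X Y m ω ∂μ := by
    rw [← lintegral_indicator (hBmeas m).compl]
    exact lintegral_mono_ae (hptwise m)
  have hsplit : ∫⁻ ω in B m, g ω ∂μ + ∫⁻ ω in (B m)ᶜ, g ω ∂μ = K * c := by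
    rw [lintegral_add_compl g (hBmeas m), hg_int]
  have hBint : ∫⁻ ω in B m, g ω ∂μ ≤ (K:ℝ≥0∞) * μ (B m) := by
    calc ∫⁻ ω in B m, g ω ∂μ ≤ ∫⁻ _ in B m, (K:ℝ≥0∞) ∂μ :=
          setLIntegral_mono' (hBmeas m) fun ω _ => hg_le ω
      _ = (K:ℝ≥0∞) * μ (B m) := setLIntegral_const _ _
  have hlower : (K:ℝ≥0∞) * c - 1 ≤ ∫⁻ ω in (B m)ᶜ, g ω ∂μ := by
    rw [tsub_le_iff_right]
    calc (K:ℝ≥0∞) * c = ∫⁻ ω in B m, g ω ∂μ + ∫⁻ ω in (B m)ᶜ, g ω ∂μ := hsplit.symm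
      _ ≤ (K:ℝ≥0∞) * μ (B m) + ∫⁻ ω in (B m)ᶜ, g ω ∂μ := add_le_add_left hBint _
      _ ≤ 1 + ∫⁻ ω in (B m)ᶜ, g ω ∂μ := add_le_add_left hKB.le _
      _ = ∫⁻ ω in (B m)ᶜ, g ω ∂μ + 1 := add_comm _ _
  have hn_lt : (n : ℝ≥0∞) < (K:ℝ≥0∞) * c - 1 := by
    rw [lt_tsub_iff_right]
    exact hKc
  exact lt_of_lt_of_le hn_lt (hlower.trans hint1)
end
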